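/- arXiv:1601.00767 — 5 statements merged into one kernel-verified Lean document; each statement's English description precedes it below -/
import Mathlib

section
/- Let M : H ⇉ H be a monotone operator (identified with its graph). (1) If (x,u) ∈ gph M, then G_M(x,u) = 0. (2) If (x,u) ∈ H × H and y, v ∈ H satisfy v ∈ M y and y + v = x + u (i.e., y is the value of the resolvent (I+M)^{-1} at x+u), then G_M(x,u) ≥ ‖x − y‖². In particular G_M is a nonnegative exterior penalty function with respect to the graph of M. -/
open MeasureTheory Set Filter Topology ENNReal RealInnerProductSpace

variable {H : Type*} [NormedAddCommGroup H] [InnerProductSpace ℝ H] [CompleteSpace H]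

/-- A multivalued operator `M : H ⇉ H`, identified with its graph, is monotone. -/
def MonotoneGraph (M : Set (H × H)) : Prop :=
  ∀ p ∈ M, ∀ q ∈ M, (0:ℝ) ≤ ⟪p.1 - q.1, p.2 - q.2⟫

/-- Maximal monotone operator: the graph is not strictly contained in a monotone graph. -/
def MaximalMonotoneGraph (M : Set (H × H)) : Prop :=
  MonotoneGraph M ∧ ∀ N : Set (H × H), MonotoneGraph N → M ⊆ N → N = M

/-- The Brézis–Haraux function `G_M(x,u) = sup_{(y,v) ∈ gph M} ⟨x−y, v−u⟩`. -/
noncomputable def BH (M : Set (H × H)) (x u : H) : EReal :=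
  ⨆ q ∈ M, ((⟪x - q.1, q.2 - u⟫ : ℝ) : EReal)

/-- Value of an extended real in `ℝ≥0∞` (used to express `∫ < +∞` for nonnegative quantities). -/
noncomputable def ennval (x : EReal) : ℝ≥0∞ :=
  if x = ⊤ then ⊤ else ENNReal.ofReal x.toReal

/-- `x` is locally absolutely continuous on `[0,∞)` with derivative `x'`. -/
def LocAC (x x' : ℝ → H) : Prop :=
  (∀ T : ℝ, IntegrableOn x' (Icc 0 T)) ∧
    ∀ t : ℝ, 0 ≤ t → x t = x 0 + ∫ s in (0:ℝ)..t, x' s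

/-- Weak convergence in average of the trajectory `x` to `xlim`. -/
def WeakAvgConv (x : ℝ → H) (xlim : H) : Prop :=
  ∀ y : H, Tendsto (fun t : ℝ => (⟪t⁻¹ • ∫ s in (0:ℝ)..t, x s, y⟫ : ℝ))
    atTop (𝓝 (⟪xlim, y⟫ : ℝ))

/-- Weak convergence of `x(t)` to `xlim` as `t → +∞`. -/
def WeakConv (x : ℝ → H) (xlim : H) : Prop :=
  ∀ y : H, Tendsto (fun t : ℝ => (⟪x t, y⟫ : ℝ)) atTop (𝓝 (⟪xlim, y⟫ : ℝ))

/-- Convexity for `ℝ ∪ {+∞}`-valued (here `EReal`-valued) functions. -/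
def EConvex {E : Type*} [AddCommGroup E] [Module ℝ E] (f : E → EReal) : Prop :=
  ∀ x y : E, ∀ a b : ℝ, 0 ≤ a → 0 ≤ b → a + b = 1 →
    f (a • x + b • y) ≤ (a : EReal) * f x + (b : EReal) * f y

/-- Subdifferential of an extended-real-valued convex function. -/
def ESubdiff (f : H → EReal) (x : H) : Set H :=
  {p : H | ∀ y : H, f x + ((⟪p, y - x⟫ : ℝ) : EReal) ≤ f y}

/-- Graph of the subdifferential operator. -/
def ESubdiffGraph (f : H → EReal) : Set (H × H) :=
  {q : H × H | q.2 ∈ ESubdiff f q.1}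

/-- Graph of the sum of two operators. -/
def GraphSum (A B : Set (H × H)) : Set (H × H) :=
  {q : H × H | ∃ u v : H, (q.1, u) ∈ A ∧ (q.1, v) ∈ B ∧ q.2 = u + v}

/-- Graph of `A + c • B`. -/
def ScaledSum (A B : Set (H × H)) (c : ℝ) : Set (H × H) :=
  {q : H × H | ∃ u v : H, (q.1, u) ∈ A ∧ (q.1, v) ∈ B ∧ q.2 = u + c • v}

/-- Graph of `c • A`. -/
def SmulGraph (c : ℝ) (A : Set (H × H)) : Set (H × H) :=
  {q : H × H | ∃ u : H, (q.1, u) ∈ A ∧ q.2 = c • u}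

/-- Domain of an operator given by its graph. -/
def GraphDom (A : Set (H × H)) : Set H := {x : H | ∃ u : H, (x, u) ∈ A}

/-- Graph of the normal cone operator of a set `C`. -/
def NormalConeGraph (C : Set H) : Set (H × H) :=
  {q : H × H | q.1 ∈ C ∧ ∀ y ∈ C, (⟪q.2, y - q.1⟫ : ℝ) ≤ 0}

/-- Lower semicontinuous hull of an extended-real-valued function. -/
noncomputable def lscHull {E : Type*} [TopologicalSpace E] (f : E → EReal) : E → EReal :=
  fun x => Filter.liminf f (𝓝 x)

/-- Inf-compactness: bounded sublevel sets are relatively compact. -/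
def InfCompact (f : H → EReal) : Prop :=
  ∀ R : ℝ, 0 < R → ∀ l : ℝ, IsCompact (closure {x : H | ‖x‖ ≤ R ∧ f x ≤ (l : EReal)})

/-- Set of global minimizers of `f`. -/
def ArgMin (f : H → EReal) : Set H := {x : H | ∀ y : H, f x ≤ f y}

/-- Set of minimizers of `f` over the set `C`. -/
def ArgMinOn (f : H → EReal) (C : Set H) : Set H := {x ∈ C | ∀ y ∈ C, f x ≤ f y}

/-- Fenchel conjugate of an extended-real-valued function. -/
noncomputable def FConj (f : H → EReal) (p : H) : EReal :=
  ⨆ x : H, (((⟪p, x⟫ : ℝ) : EReal) - f x)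

/-- Support function of a set `C`. -/
noncomputable def SuppFn (C : Set H) (p : H) : EReal :=
  ⨆ x : C, ((⟪p, (x : H)⟫ : ℝ) : EReal)

section BrezisHaraux

variable {E : Type*} [NormedAddCommGroup E] [InnerProductSpace ℝ E] {M : Set (E × E)} {x u : E}

theorem le_BH_of_mem {q : E × E} (hq : q ∈ M) : ((⟪x - q.1, q.2 - u⟫ : ℝ) : EReal) ≤ BH M x u :=
  le_iSup₂ (f := fun q (_ : q ∈ M) => ((⟪x - q.1, q.2 - u⟫ : ℝ) : EReal)) q hq

theorem BH_nonpos_iff : BH M x u ≤ 0 ↔ ∀ q ∈ M, 0 ≤ ⟪x - q.1, u - q.2⟫ := by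
  refine iSup₂_le_iff.trans (forall₂_congr fun q _ => ?_)
  rw [EReal.coe_nonpos, ← neg_sub u q.2, inner_neg_right, neg_nonpos]

theorem BH_nonneg_of_mem (h : (x, u) ∈ M) : 0 ≤ BH M x u := by
  simpa using le_BH_of_mem (x := x) (u := u) h

theorem BH_eq_zero_of_mem (hM : MonotoneGraph M) (h : (x, u) ∈ M) : BH M x u = 0 :=
  le_antisymm (BH_nonpos_iff.mpr fun q hq => hM (x, u) h q hq) (BH_nonneg_of_mem h)

theorem sq_norm_sub_le_BH {y v : E} (hyv : (y, v) ∈ M) (h : y + v = x + u) :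
    ((‖x - y‖ ^ 2 : ℝ) : EReal) ≤ BH M x u := by
  have hvu : v - u = x - y := by rw [sub_eq_sub_iff_add_eq_add, add_comm, h]
  simpa [hvu, real_inner_self_eq_norm_sq] using le_BH_of_mem (x := x) (u := u) hyv

end BrezisHaraux

/-- For a monotone operator `M`, the Brézis–Haraux function vanishes on the
graph of `M`, and `G_M(x,u) ≥ ‖x−y‖²` where `y` is the resolvent value of `x+u`;
in particular `G_M` is a nonnegative exterior penalty function for the graph. -/
theorem brezisHaraux_penalty
    (M : Set (H × H)) (hM : MonotoneGraph M) :
    (∀ x u : H, (x, u) ∈ M → BH M x u = 0) ∧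
    (∀ x u y v : H, (y, v) ∈ M → y + v = x + u →
      ((‖x - y‖ ^ 2 : ℝ) : EReal) ≤ BH M x u) :=
  ⟨fun _ _ => BH_eq_zero_of_mem hM, fun _ _ _ _ => sq_norm_sub_le_BH⟩
end

section
/- Let {A_t : H ⇉ H, t ≥ 0} be a family of maximal monotone operators and let A_∞ : H ⇉ H be maximal monotone. Assume that for every (z,p) ∈ gph A_∞ one has G_{A_t}(z,p) → 0 as t → +∞. Then the resolvents of A_t converge pointwise strongly to the resolvent of A_∞; precisely: for every y ∈ H, if z, p ∈ H satisfy p ∈ A_∞ z and z + p = y, and if for each t ≥ 0 the points y_t, v_t ∈ H satisfy v_t ∈ A_t y_t and y_t + v_t = y, then ‖y_t − z‖ → 0 as t → +∞. -/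
open MeasureTheory Set Filter Topology ENNReal RealInnerProductSpace

variable {H : Type*} [NormedAddCommGroup H] [InnerProductSpace ℝ H] [CompleteSpace H]

/-! If `y' + v' = z + p` with `v' ∈ A_t y'`, then `v' - p = z - y'`, so the pair `(y', v')` alone
already forces `G_{A_t}(z, p) ≥ ‖y' - z‖²`. Hence `G_{A_t}(z, p) → 0` squeezes `‖y_t - z‖` to `0`. -/

theorem inner_le_BH {E : Type*} [NormedAddCommGroup E] [InnerProductSpace ℝ E]
    {M : Set (E × E)} {q : E × E} (hq : q ∈ M) (x u : E) :
    ((⟪x - q.1, q.2 - u⟫ : ℝ) : EReal) ≤ BH M x u :=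
  le_iSup₂ (f := fun q (_ : q ∈ M) => ((⟪x - q.1, q.2 - u⟫ : ℝ) : EReal)) q hq

theorem sq_norm_sub_le_BH_s1 {E : Type*} [NormedAddCommGroup E] [InnerProductSpace ℝ E]
    {M : Set (E × E)} {x v z p : E} (hxv : (x, v) ∈ M) (hsum : x + v = z + p) :
    ((‖x - z‖ ^ 2 : ℝ) : EReal) ≤ BH M z p := by
  have hv : v - p = z - x := sub_eq_sub_iff_add_eq_add.mpr (by rw [add_comm, hsum])
  have hnorm : ⟪z - x, v - p⟫ = ‖x - z‖ ^ 2 := by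
    rw [hv, real_inner_self_eq_norm_sq, norm_sub_rev]
  simpa only [hnorm] using inner_le_BH hxv z p

theorem tendsto_zero_of_nonneg_of_coe_le {α : Type*} {l : Filter α} {f : α → ℝ} {g : α → EReal}
    (hf : ∀ᶠ a in l, 0 ≤ f a) (hfg : ∀ᶠ a in l, (f a : EReal) ≤ g a)
    (hg : Tendsto g l (𝓝 0)) : Tendsto f l (𝓝 0) :=
  EReal.tendsto_coe.mp <| tendsto_of_tendsto_of_tendsto_of_le_of_le' tendsto_const_nhds hg
    (hf.mono fun _ ha => EReal.coe_nonneg.mpr ha) hfg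

theorem resolvent_convergence_of_BH_tendsto_zero_general
    (A : ℝ → Set (H × H)) (Ainf : Set (H × H))
    (hG : ∀ z p : H, (z, p) ∈ Ainf →
      Tendsto (fun t : ℝ => BH (A t) z p) atTop (𝓝 (0 : EReal))) :
    ∀ y z p : H, (z, p) ∈ Ainf → z + p = y →
      ∀ yt vt : ℝ → H,
        (∀ t : ℝ, 0 ≤ t → (yt t, vt t) ∈ A t ∧ yt t + vt t = y) →
        Tendsto (fun t : ℝ => ‖yt t - z‖) atTop (𝓝 (0 : ℝ)) := by
  intro y z p hzp hsum yt vt hyt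
  have hbound : ∀ᶠ t in atTop, ((‖yt t - z‖ ^ 2 : ℝ) : EReal) ≤ BH (A t) z p :=
    (eventually_ge_atTop 0).mono fun t ht =>
      sq_norm_sub_le_BH_s1 (hyt t ht).1 ((hyt t ht).2.trans hsum.symm)
  have hsq : Tendsto (fun t => ‖yt t - z‖ ^ 2) atTop (𝓝 0) :=
    tendsto_zero_of_nonneg_of_coe_le (.of_forall fun _ => sq_nonneg _) hbound (hG z p hzp)
  simpa only [Real.sqrt_sq (norm_nonneg _), Real.sqrt_zero] using hsq.sqrt

/-- If the Brézis–Haraux functions `G_{A_t}(z,p)` tend to `0` for every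
`(z,p)` in the graph of `A∞`, then the resolvents of `A_t` converge pointwise strongly
to the resolvent of `A∞`. -/
theorem resolvent_convergence_of_BH_tendsto_zero
    (A : ℝ → Set (H × H)) (Ainf : Set (H × H))
    (hA : ∀ t : ℝ, 0 ≤ t → MaximalMonotoneGraph (A t))
    (hAinf : MaximalMonotoneGraph Ainf)
    (hG : ∀ z p : H, (z, p) ∈ Ainf →
      Tendsto (fun t : ℝ => BH (A t) z p) atTop (𝓝 (0 : EReal))) :
    ∀ y z p : H, (z, p) ∈ Ainf → z + p = y →
      ∀ yt vt : ℝ → H,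
        (∀ t : ℝ, 0 ≤ t → (yt t, vt t) ∈ A t ∧ yt t + vt t = y) →
        Tendsto (fun t : ℝ => ‖yt t - z‖) atTop (𝓝 (0 : ℝ)) :=
  resolvent_convergence_of_BH_tendsto_zero_general A Ainf hG
end

section
/- (Baillon–Brézis) Let A : H ⇉ H be a maximal monotone operator such that S = A^{-1}(0) ≠ ∅. Let x(·) be a strong global solution of the autonomous inclusion ẋ(t) + A(x(t)) ∋ 0. Then there exists x_∞ ∈ A^{-1}(0) such that the averages (1/t)∫₀ᵗ x(s) ds converge weakly to x_∞ in H as t → +∞, i.e., ⟨(1/t)∫₀ᵗ x(s) ds, y⟩ → ⟨x_∞, y⟩ for every y ∈ H. -/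
open MeasureTheory Set Filter Topology ENNReal RealInnerProductSpace

variable {H : Type*} [NormedAddCommGroup H] [InnerProductSpace ℝ H] [CompleteSpace H]

/-!
Testing monotonicity of `A` against `(x t, -ẋ t)` shows that for every `(y, v) ∈ A` the function
`t ↦ ‖x t - y‖² + 2 ∫₀ᵗ ⟪x s - y, v⟫ ds` is nonincreasing. With `v = 0`, the distance from `x t` to
every zero of `A` is nonincreasing, so the averages `σ t = t⁻¹ ∫₀ᵗ x` are bounded and have weak
cluster points. Dividing by `t` gives `⟪σ t - y, v⟫ ≤ ‖x 0 - y‖² / 2t`, so every weak cluster point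
`w` satisfies `⟪w - y, v⟫ ≤ 0` on `A` and is a zero of `A` by maximality. For two weak cluster
points `w₁, w₂`, polarization turns the convergence of `‖x t - wᵢ‖` into convergence of
`⟪x t, w₁ - w₂⟫`, hence of its Cesàro mean `⟪σ t, w₁ - w₂⟫`; evaluating that limit at `w₁` and at
`w₂` gives `‖w₁ - w₂‖² = 0`. Bounded sets being weakly compact, the unique weak cluster point is
the weak limit.
-/

theorem MapClusterPt.le_of_eventually_le_of_tendsto {α β : Type*} [LinearOrder β]
    [DenselyOrdered β] [TopologicalSpace β] [OrderTopology β] {l : Filter α} {f g : α → β}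
    {c L : β} (hc : MapClusterPt c l f) (hfg : ∀ᶠ t in l, f t ≤ g t)
    (hg : Tendsto g l (𝓝 L)) : c ≤ L := by
  by_contra! hLc
  obtain ⟨m, hLm, hmc⟩ := exists_between hLc
  have hfm : ∀ᶠ t in l, f t ∈ Iic m := by
    filter_upwards [hfg, hg.eventually (gt_mem_nhds hLm)] with t hft hgt using hft.trans hgt.le
  exact (isClosed_Iic.mem_of_mapClusterPt hc hfm).not_gt hmc

namespace AbsolutelyContinuousOnInterval

variable {X Y : Type*} [PseudoMetricSpace X] [PseudoMetricSpace Y] {a b : ℝ}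

theorem of_dist_le_mul {f : ℝ → X} {g : ℝ → Y} (hg : AbsolutelyContinuousOnInterval g a b)
    (C : ℝ) (hfg : ∀ s ∈ uIcc a b, ∀ t ∈ uIcc a b, dist (f s) (f t) ≤ C * dist (g s) (g t)) :
    AbsolutelyContinuousOnInterval f a b := by
  unfold AbsolutelyContinuousOnInterval at hg ⊢
  refine squeeze_zero' (Eventually.of_forall fun E => Finset.sum_nonneg fun _ _ => dist_nonneg)
    ?_ (by simpa only [mul_zero] using hg.const_mul C)
  filter_upwards [mem_inf_of_right (mem_principal_self _)] with E hE
  rw [Finset.mul_sum]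
  exact Finset.sum_le_sum fun i hi => hfg _ (hE.1 i hi).1 _ (hE.1 i hi).2

theorem norm {F : Type*} [SeminormedAddCommGroup F] {f : ℝ → F}
    (hf : AbsolutelyContinuousOnInterval f a b) :
    AbsolutelyContinuousOnInterval (fun t => ‖f t‖) a b :=
  hf.of_dist_le_mul 1 fun s _ t _ => by simpa [dist_eq_norm] using dist_norm_norm_le (f s) (f t)

theorem le_of_ae_hasDerivAt_nonpos {f f' : ℝ → ℝ} (hf : AbsolutelyContinuousOnInterval f a b)
    (hab : a ≤ b) (hderiv : ∀ᵐ t, t ∈ Ioo a b → HasDerivAt f (f' t) t)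
    (hnonpos : ∀ᵐ t, t ∈ Ioo a b → f' t ≤ 0) : f b ≤ f a := by
  have hint : 0 ≤ ∫ t in a..b, -deriv f t := by
    refine intervalIntegral.integral_nonneg_of_ae_restrict hab ?_
    rw [← Measure.restrict_congr_set Ioo_ae_eq_Icc, EventuallyLE,
      ae_restrict_iff' measurableSet_Ioo]
    filter_upwards [hderiv, hnonpos] with t hd hn ht
    simpa [(hd ht).deriv] using hn ht
  rw [intervalIntegral.integral_neg, hf.integral_deriv_eq_sub] at hint
  linarith

end AbsolutelyContinuousOnInterval

section CesaroMean

variable {E : Type*} [NormedAddCommGroup E] [NormedSpace ℝ E]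

noncomputable def cesaroMean (f : ℝ → E) (t : ℝ) : E :=
  t⁻¹ • ∫ s in 0..t, f s

variable [CompleteSpace E]

theorem Filter.Tendsto.cesaroMean {h : ℝ → E} {L : E} (hL : Tendsto h atTop (𝓝 L))
    (hint : ∀ T, 0 ≤ T → IntervalIntegrable h volume 0 T) :
    Tendsto (cesaroMean h) atTop (𝓝 L) := by
  have hdev : Tendsto (fun t => t⁻¹ • ∫ s in 0..t, (h s - L)) atTop (𝓝 0) := by
    rw [Metric.tendsto_nhds]
    intro ε hε
    obtain ⟨T, hT⟩ := eventually_atTop.mp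
      (hL.eventually (Metric.closedBall_mem_nhds L (half_pos hε)))
    set T₀ := max T 0
    set C := ‖∫ s in 0..T₀, (h s - L)‖
    have hint' : ∀ T, 0 ≤ T → IntervalIntegrable (fun s => h s - L) volume 0 T :=
      fun T hT => (hint T hT).sub intervalIntegrable_const
    filter_upwards [eventually_gt_atTop T₀, eventually_gt_atTop (2 * C / ε)] with t htT htC
    have hT₀ : 0 ≤ T₀ := le_max_right T 0
    have ht : 0 < t := hT₀.trans_lt htT
    have htail : ‖∫ s in T₀..t, (h s - L)‖ ≤ ε / 2 * |t - T₀| :=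
      intervalIntegral.norm_integral_le_of_norm_le_const fun s hs =>
        dist_eq_norm (h s) L ▸ hT s ((le_max_left T 0).trans (uIoc_of_le htT.le ▸ hs).1.le)
    have hsplit := intervalIntegral.integral_add_adjacent_intervals (hint' T₀ hT₀)
      ((hint' T₀ hT₀).symm.trans (hint' t ht.le))
    have hbound : ‖∫ s in 0..t, (h s - L)‖ ≤ C + ε / 2 * t := by
      rw [abs_of_pos (sub_pos.mpr htT)] at htail
      rw [← hsplit]
      calc _ ≤ C + ‖∫ s in T₀..t, (h s - L)‖ := norm_add_le _ _
        _ ≤ C + ε / 2 * t := by nlinarith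
    rw [dist_zero_right, norm_smul, norm_inv, Real.norm_of_nonneg ht.le, inv_mul_lt_iff₀ ht]
    rw [div_lt_iff₀ hε] at htC
    linarith
  refine tendsto_sub_nhds_zero_iff.mp (hdev.congr' ?_)
  filter_upwards [eventually_gt_atTop 0] with t ht
  rw [_root_.cesaroMean, intervalIntegral.integral_sub (hint t ht.le) intervalIntegrable_const,
    smul_sub, intervalIntegral.integral_const, sub_zero, smul_smul, inv_mul_cancel₀ ht.ne', one_smul]

theorem inner_cesaroMean {f : ℝ → H} {t : ℝ} (hf : IntervalIntegrable f volume 0 t) (v : H) :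
    ⟪cesaroMean f t, v⟫ = cesaroMean (fun s => ⟪f s, v⟫) t := by
  rw [cesaroMean, cesaroMean, real_inner_smul_left, smul_eq_mul]
  congr 1
  simp_rw [real_inner_comm v]
  exact ((innerSL ℝ v).intervalIntegral_comp_comm hf).symm

end CesaroMean

-- The weak topology of `H`, carried by the Riesz isomorphism to the weak-* topology of the dual,
-- where Banach–Alaoglu is available.
open InnerProductSpace in
def WeakMapClusterPt {α : Type*} (w : H) (l : Filter α) (σ : α → H) : Prop :=
  MapClusterPt (StrongDual.toWeakDual (toDual ℝ H w)) l
    (fun t => StrongDual.toWeakDual (toDual ℝ H (σ t)))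

section WeakClusterPoints

open InnerProductSpace

variable {α : Type*} {l : Filter α} {σ : α → H} {M : ℝ}

theorem WeakMapClusterPt.inner {w : H} (h : WeakMapClusterPt w l σ) (y : H) :
    MapClusterPt ⟪w, y⟫ l (fun t => ⟪σ t, y⟫) :=
  h.continuousAt_comp (WeakDual.eval_continuous y).continuousAt

theorem eventually_mem_weakDual_closedBall (hbd : ∀ᶠ t in l, ‖σ t‖ ≤ M) :
    ∀ᶠ t in l, StrongDual.toWeakDual (toDual ℝ H (σ t)) ∈
      WeakDual.toStrongDual ⁻¹' Metric.closedBall 0 M := by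
  filter_upwards [hbd] with t ht
  simpa using ht

theorem exists_weakMapClusterPt [l.NeBot] (hbd : ∀ᶠ t in l, ‖σ t‖ ≤ M) :
    ∃ w, WeakMapClusterPt w l σ := by
  obtain ⟨φ, -, hφ⟩ := (WeakDual.isCompact_closedBall (0 : StrongDual ℝ H) M).exists_mapClusterPt
    (tendsto_principal.mpr (eventually_mem_weakDual_closedBall hbd))
  exact ⟨(toDual ℝ H).symm (WeakDual.toStrongDual φ), by simpa [WeakMapClusterPt] using hφ⟩

theorem tendsto_inner_of_forall_weakMapClusterPt_eq {w : H} (hbd : ∀ᶠ t in l, ‖σ t‖ ≤ M)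
    (huniq : ∀ w', WeakMapClusterPt w' l σ → w' = w) (y : H) :
    Tendsto (fun t => ⟪σ t, y⟫) l (𝓝 ⟪w, y⟫) := by
  have hK := WeakDual.isCompact_closedBall (0 : StrongDual ℝ H) M
  have hweak := hK.tendsto_nhds_of_unique_mapClusterPt (y := StrongDual.toWeakDual (toDual ℝ H w))
    (eventually_mem_weakDual_closedBall hbd) fun φ _ hφ => by
      rw [← huniq ((toDual ℝ H).symm (WeakDual.toStrongDual φ))
        (by simpa [WeakMapClusterPt] using hφ)]
      simp
  exact ((WeakDual.eval_continuous y).tendsto _).comp hweak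

end WeakClusterPoints

theorem eq_of_weakMapClusterPt_cesaroMean {x : ℝ → H} (hx : ContinuousOn x (Ici 0))
    {w₁ w₂ : H} (h₁ : ∃ ℓ, Tendsto (fun t => ‖x t - w₁‖) atTop (𝓝 ℓ))
    (h₂ : ∃ ℓ, Tendsto (fun t => ‖x t - w₂‖) atTop (𝓝 ℓ))
    (hw₁ : WeakMapClusterPt w₁ atTop (cesaroMean x))
    (hw₂ : WeakMapClusterPt w₂ atTop (cesaroMean x)) : w₁ = w₂ := by
  obtain ⟨ℓ₁, hℓ₁⟩ := h₁
  obtain ⟨ℓ₂, hℓ₂⟩ := h₂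
  have hxT : ∀ T, 0 ≤ T → ContinuousOn x (uIcc 0 T) := fun T hT =>
    hx.mono (uIcc_of_le hT ▸ Icc_subset_Ici_self)
  have hpolar : ∀ t, ⟪x t, w₁ - w₂⟫ =
      (‖x t - w₂‖ ^ 2 - ‖x t - w₁‖ ^ 2 + ‖w₁‖ ^ 2 - ‖w₂‖ ^ 2) / 2 := fun t => by
    rw [norm_sub_sq_real, norm_sub_sq_real, inner_sub_right]
    ring
  have hconv : Tendsto (fun t => ⟪x t, w₁ - w₂⟫) atTop
      (𝓝 ((ℓ₂ ^ 2 - ℓ₁ ^ 2 + ‖w₁‖ ^ 2 - ‖w₂‖ ^ 2) / 2)) := by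
    simp_rw [hpolar]
    exact ((((hℓ₂.pow 2).sub (hℓ₁.pow 2)).add_const _).sub_const _).div_const 2
  have hmean : Tendsto (fun t => ⟪cesaroMean x t, w₁ - w₂⟫) atTop
      (𝓝 ((ℓ₂ ^ 2 - ℓ₁ ^ 2 + ‖w₁‖ ^ 2 - ‖w₂‖ ^ 2) / 2)) := by
    refine (hconv.cesaroMean fun T hT =>
      ((hxT T hT).inner continuousOn_const).intervalIntegrable).congr' ?_
    filter_upwards [eventually_ge_atTop 0] with t ht
    exact (inner_cesaroMean (hxT t ht).intervalIntegrable _).symm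
  have hval : ∀ w, WeakMapClusterPt w atTop (cesaroMean x) →
      ⟪w, w₁ - w₂⟫ = (ℓ₂ ^ 2 - ℓ₁ ^ 2 + ‖w₁‖ ^ 2 - ‖w₂‖ ^ 2) / 2 := fun w hw =>
    eq_of_nhds_neBot ((hw.inner (w₁ - w₂)).clusterPt.mono hmean)
  have hzero : ⟪w₁ - w₂, w₁ - w₂⟫ = 0 := by
    rw [inner_sub_left, hval w₁ hw₁, hval w₂ hw₂, sub_self]
  exact sub_eq_zero.mp (inner_self_eq_zero.mp hzero)

theorem MaximalMonotoneGraph.mem_of_forall_inner_nonneg {E : Type*} [NormedAddCommGroup E]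
    [InnerProductSpace ℝ E] {A : Set (E × E)}
    (hA : MaximalMonotoneGraph A) {p : E × E} (hp : ∀ q ∈ A, 0 ≤ ⟪p.1 - q.1, p.2 - q.2⟫) :
    p ∈ A := by
  have hmono : MonotoneGraph (insert p A) := by
    rintro q (rfl | hq) r (rfl | hr)
    · simp
    · exact hp r hr
    · simpa only [← neg_sub q.1, ← neg_sub q.2, inner_neg_neg] using hp q hq
    · exact hA.1 q hq r hr
  exact hA.2 _ hmono (subset_insert p A) ▸ mem_insert p A

namespace LocAC

variable {E : Type*} [NormedAddCommGroup E] [InnerProductSpace ℝ E] {x x' : ℝ → E}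
  {A : Set (E × E)} {a b : ℝ}

theorem intervalIntegrable (hx : LocAC x x') (ha : 0 ≤ a) (hb : 0 ≤ b) :
    IntervalIntegrable x' volume a b :=
  ((hx.1 (max a b)).mono_set fun _ ht => ⟨(le_min ha hb).trans ht.1, ht.2⟩).intervalIntegrable

theorem sub_eq_intervalIntegral (hx : LocAC x x') (ha : 0 ≤ a) (hb : 0 ≤ b) :
    x b - x a = ∫ s in a..b, x' s := by
  rw [hx.2 b hb, hx.2 a ha, add_sub_add_left_eq_sub,
    intervalIntegral.integral_interval_sub_left (hx.intervalIntegrable le_rfl hb)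
      (hx.intervalIntegrable le_rfl ha)]

theorem absolutelyContinuousOnInterval (hx : LocAC x x') (ha : 0 ≤ a) (hb : 0 ≤ b) :
    AbsolutelyContinuousOnInterval x a b := by
  refine ((hx.intervalIntegrable ha hb).norm.absolutelyContinuousOnInterval_intervalIntegral
    left_mem_uIcc).of_dist_le_mul 1 fun s hs t ht => ?_
  have hs0 : 0 ≤ s := (le_min ha hb).trans hs.1
  have ht0 : 0 ≤ t := (le_min ha hb).trans ht.1
  rw [one_mul, dist_eq_norm, Real.dist_eq, hx.sub_eq_intervalIntegral ht0 hs0,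
    intervalIntegral.integral_interval_sub_left]
  · exact intervalIntegral.norm_integral_le_abs_integral_norm
  · exact (hx.intervalIntegrable ha hs0).norm
  · exact (hx.intervalIntegrable ha ht0).norm

theorem continuousOn (hx : LocAC x x') : ContinuousOn x (Ici 0) := by
  intro t ht
  have hT : 0 ≤ t + 1 := by linarith [mem_Ici.mp ht]
  refine ((hx.absolutelyContinuousOnInterval le_rfl hT).continuousOn t ?_).mono_of_mem_nhdsWithin ?_
  · rw [uIcc_of_le hT]; exact ⟨ht, by linarith⟩
  · rw [uIcc_of_le hT, ← Ici_inter_Iic]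
    exact inter_mem_nhdsWithin _ (Iic_mem_nhds (by linarith))

variable [CompleteSpace E]

theorem ae_hasDerivAt (hx : LocAC x x') (hb : 0 ≤ b) :
    ∀ᵐ t, t ∈ Ioo 0 b → HasDerivAt x (x' t) t := by
  filter_upwards [(hx.intervalIntegrable le_rfl hb).ae_hasDerivAt_integral] with t hprim ht
  have hderiv := hprim (Icc_subset_uIcc (Ioo_subset_Icc_self ht)) 0 left_mem_uIcc
  refine (hderiv.const_add (x 0)).congr_of_eventuallyEq ?_
  filter_upwards [lt_mem_nhds ht.1] with u hu using hx.2 u hu.le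

theorem norm_sub_sq_add_integral_inner_le (hA : MonotoneGraph A)
    (hx : LocAC x x') (hsol : ∀ᵐ t ∂(volume.restrict (Ioi (0:ℝ))), (x t, -x' t) ∈ A)
    {y v : E} (hyv : (y, v) ∈ A) (ha : 0 ≤ a) (hab : a ≤ b) :
    ‖x b - y‖ ^ 2 + 2 * ∫ s in a..b, ⟪x s - y, v⟫ ≤ ‖x a - y‖ ^ 2 := by
  have hb : 0 ≤ b := ha.trans hab
  have hxac := hx.absolutelyContinuousOnInterval ha hb
  have hdist : AbsolutelyContinuousOnInterval (fun t => ‖x t - y‖) a b :=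
    (hxac.of_dist_le_mul 1 fun s _ t _ => by rw [one_mul, dist_sub_right]).norm
  have hint : IntervalIntegrable (fun s => ⟪x s - y, v⟫) volume a b :=
    ((hxac.continuousOn.sub continuousOn_const).inner continuousOn_const).intervalIntegrable
  have hψac : AbsolutelyContinuousOnInterval
      (fun t => ‖x t - y‖ ^ 2 + 2 * ∫ s in a..t, ⟪x s - y, v⟫) a b := by
    simpa only [sq] using (hdist.fun_mul hdist).fun_add
      ((hint.absolutelyContinuousOnInterval_intervalIntegral left_mem_uIcc).const_mul 2)
  have hderiv : ∀ᵐ t, t ∈ Ioo a b → HasDerivAt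
      (fun t => ‖x t - y‖ ^ 2 + 2 * ∫ s in a..t, ⟪x s - y, v⟫)
      (2 * ⟪x t - y, x' t⟫ + 2 * ⟪x t - y, v⟫) t := by
    filter_upwards [hx.ae_hasDerivAt hb, hint.ae_hasDerivAt_integral] with t hxt hprim ht
    exact ((hxt ⟨ha.trans_lt ht.1, ht.2⟩).sub_const y).norm_sq.add
      ((hprim (Icc_subset_uIcc (Ioo_subset_Icc_self ht)) a left_mem_uIcc).const_mul 2)
  have hnonpos : ∀ᵐ t, t ∈ Ioo a b → 2 * ⟪x t - y, x' t⟫ + 2 * ⟪x t - y, v⟫ ≤ 0 := by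
    filter_upwards [(ae_restrict_iff' measurableSet_Ioi).mp hsol] with t hmem ht
    have hmono := hA _ (hmem (ha.trans_lt ht.1)) _ hyv
    simp only [inner_sub_right, inner_neg_right] at hmono
    linarith
  simpa using hψac.le_of_ae_hasDerivAt_nonpos hab hderiv hnonpos

theorem norm_sub_le_of_le (hA : MonotoneGraph A) (hx : LocAC x x')
    (hsol : ∀ᵐ t ∂(volume.restrict (Ioi (0:ℝ))), (x t, -x' t) ∈ A) {z : E} (hz : (z, 0) ∈ A)
    (ha : 0 ≤ a) (hab : a ≤ b) :
    ‖x b - z‖ ≤ ‖x a - z‖ := by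
  have := hx.norm_sub_sq_add_integral_inner_le hA hsol hz ha hab
  simp only [inner_zero_right, intervalIntegral.integral_zero, mul_zero, add_zero] at this
  exact pow_le_pow_iff_left₀ (norm_nonneg _) (norm_nonneg _) two_ne_zero |>.mp this

theorem exists_tendsto_norm_sub (hA : MonotoneGraph A) (hx : LocAC x x')
    (hsol : ∀ᵐ t ∂(volume.restrict (Ioi (0:ℝ))), (x t, -x' t) ∈ A) {z : E} (hz : (z, 0) ∈ A) :
    ∃ ℓ, Tendsto (fun t => ‖x t - z‖) atTop (𝓝 ℓ) := by
  have hanti : Antitone fun t => ‖x (max t 0) - z‖ := fun s t hst =>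
    hx.norm_sub_le_of_le hA hsol hz (le_max_right s 0) (max_le_max_right 0 hst)
  refine ⟨_, (tendsto_atTop_ciInf hanti ⟨0, ?_⟩).congr' ?_⟩
  · rintro _ ⟨t, rfl⟩
    exact norm_nonneg _
  · filter_upwards [eventually_ge_atTop 0] with t ht
    rw [max_eq_left ht]

theorem norm_cesaroMean_le (hA : MonotoneGraph A) (hx : LocAC x x')
    (hsol : ∀ᵐ t ∂(volume.restrict (Ioi (0:ℝ))), (x t, -x' t) ∈ A) {z : E} (hz : (z, 0) ∈ A)
    {t : ℝ} (ht : 0 < t) :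
    ‖cesaroMean x t‖ ≤ ‖z‖ + ‖x 0 - z‖ := by
  have hbound : ∀ s ∈ uIoc 0 t, ‖x s‖ ≤ ‖z‖ + ‖x 0 - z‖ := fun s hs => by
    rw [uIoc_of_le ht.le] at hs
    calc ‖x s‖ ≤ ‖z‖ + ‖x s - z‖ := by simpa using norm_add_le z (x s - z)
      _ ≤ ‖z‖ + ‖x 0 - z‖ := by gcongr; exact hx.norm_sub_le_of_le hA hsol hz le_rfl hs.1.le
  rw [cesaroMean, norm_smul, norm_inv, Real.norm_of_nonneg ht.le, inv_mul_le_iff₀ ht]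
  simpa [abs_of_pos ht, mul_comm] using intervalIntegral.norm_integral_le_of_norm_le_const hbound

theorem inner_cesaroMean_le (hA : MonotoneGraph A) (hx : LocAC x x')
    (hsol : ∀ᵐ t ∂(volume.restrict (Ioi (0:ℝ))), (x t, -x' t) ∈ A) {y v : E} (hyv : (y, v) ∈ A)
    {t : ℝ} (ht : 0 < t) :
    ⟪cesaroMean x t, v⟫ ≤ ⟪y, v⟫ + ‖x 0 - y‖ ^ 2 / (2 * t) := by
  have hkey := hx.norm_sub_sq_add_integral_inner_le hA hsol hyv le_rfl ht.le
  have hxc := (hx.absolutelyContinuousOnInterval le_rfl ht.le).continuousOn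
  have hmean : ∫ s in 0..t, ⟪x s - y, v⟫ = t * (⟪cesaroMean x t, v⟫ - ⟪y, v⟫) := by
    simp only [inner_sub_left]
    rw [intervalIntegral.integral_sub (hxc.inner continuousOn_const).intervalIntegrable
      intervalIntegrable_const, inner_cesaroMean hxc.intervalIntegrable, cesaroMean,
      intervalIntegral.integral_const, smul_eq_mul, smul_eq_mul, sub_zero, mul_sub,
      mul_inv_cancel_left₀ ht.ne']
  rw [hmean] at hkey
  rw [← sub_le_iff_le_add', le_div_iff₀ (by positivity)]
  nlinarith [sq_nonneg ‖x t - y‖]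

theorem mem_of_weakMapClusterPt_cesaroMean (hA : MaximalMonotoneGraph A) (hx : LocAC x x')
    (hsol : ∀ᵐ t ∂(volume.restrict (Ioi (0:ℝ))), (x t, -x' t) ∈ A) {w : E}
    (hw : WeakMapClusterPt w atTop (cesaroMean x)) : (w, 0) ∈ A := by
  refine hA.mem_of_forall_inner_nonneg fun ⟨y, v⟩ hyv => ?_
  have hdecay : Tendsto (fun t => ⟪y, v⟫ + ‖x 0 - y‖ ^ 2 / (2 * t)) atTop (𝓝 (⟪y, v⟫ + 0)) :=
    tendsto_const_nhds.add (tendsto_const_nhds.div_atTop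
      (tendsto_id.const_mul_atTop two_pos))
  have hle := (hw.inner v).le_of_eventually_le_of_tendsto
    ((eventually_gt_atTop 0).mono fun t ht => hx.inner_cesaroMean_le hA.1 hsol hyv ht) hdecay
  simp only [zero_sub, inner_neg_right, inner_sub_left, add_zero] at hle ⊢
  linarith

end LocAC

/-- Baillon–Brézis: every strong global solution of the autonomous inclusion
`ẋ(t) + A(x(t)) ∋ 0`, with `A` maximal monotone and `A⁻¹(0) ≠ ∅`, converges weakly in
average to a zero of `A`. -/
theorem baillon_brezis
    (A : Set (H × H)) (hA : MaximalMonotoneGraph A)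
    (hSne : ∃ z : H, (z, 0) ∈ A)
    (x x' : ℝ → H) (hx : LocAC x x')
    (hsol : ∀ᵐ t ∂(volume.restrict (Ioi (0:ℝ))), (x t, -x' t) ∈ A) :
    ∃ xlim : H, (xlim, 0) ∈ A ∧ WeakAvgConv x xlim := by
  obtain ⟨z, hz⟩ := hSne
  have hbd : ∀ᶠ t in atTop, ‖cesaroMean x t‖ ≤ ‖z‖ + ‖x 0 - z‖ :=
    (eventually_gt_atTop 0).mono fun t ht => hx.norm_cesaroMean_le hA.1 hsol hz ht
  have hzero : ∀ w, WeakMapClusterPt w atTop (cesaroMean x) → (w, 0) ∈ A := fun w hw =>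
    hx.mem_of_weakMapClusterPt_cesaroMean hA hsol hw
  have hlim : ∀ w, WeakMapClusterPt w atTop (cesaroMean x) →
      ∃ ℓ, Tendsto (fun t => ‖x t - w‖) atTop (𝓝 ℓ) := fun w hw =>
    hx.exists_tendsto_norm_sub hA.1 hsol (hzero w hw)
  obtain ⟨w, hw⟩ := exists_weakMapClusterPt hbd
  refine ⟨w, hzero w hw, tendsto_inner_of_forall_weakMapClusterPt_eq hbd fun w' hw' => ?_⟩
  exact eq_of_weakMapClusterPt_cesaroMean hx.continuousOn (hlim w' hw') (hlim w hw) hw' hw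
end

section
/- Assume (H_Ψ): Ψ : H → ℝ ∪ {+∞} is a closed convex proper function with inf_H Ψ = 0 and C = argmin Ψ ≠ ∅; and (H_Φ): Φ : H → ℝ ∪ {+∞} is a closed convex proper function with inf_C Φ = 0 and argmin_C Φ ≠ ∅. Suppose that S = argmin Ψ ∩ argmin Φ is nonempty and bounded, and that Ψ + Φ satisfies the inf-compactness property. Let β : [0,+∞) → [0,+∞) be a map with β(t) → +∞ as t → +∞. Then every strong global solution x(·) of ẋ(t) + ∂Φ(x(t)) + β(t) ∂Ψ(x(t)) ∋ 0 converges weakly in H, as t → +∞, to some x_∞ ∈ S = argmin Ψ ∩ argmin Φ. -/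
open MeasureTheory Set Filter Topology ENNReal RealInnerProductSpace

variable {H : Type*} [NormedAddCommGroup H] [InnerProductSpace ℝ H] [CompleteSpace H]

/-!
The normalisations `inf Ψ = 0` and `inf_C Φ = 0` make `Φ` and `Ψ` nonnegative and zero on `S`.
Along a trajectory, for every `z` with `Φ z = Ψ z = 0` the subgradient inequalities give
`d/dt ½‖x(t) - z‖² = ⟪ẋ(t), x(t) - z⟫ ≤ -(Φ(x(t)) + β(t) Ψ(x(t))) ≤ 0`, so every distance
`‖x(t) - z‖` to such a point is nonincreasing (Fejér monotonicity) and the trajectory is bounded.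
Since `β(t) ≥ 1` eventually, the right-hand side cannot stay below `-ε` forever (`‖x(t) - z‖²`
would become negative), hence there are times at which both `Φ(x(t))` and `Ψ(x(t))` are
arbitrarily small. By inf-compactness these points accumulate at some `p`, which by lower
semicontinuity satisfies `Φ p = Ψ p = 0`. Fejér monotonicity with respect to `p` then upgrades the
accumulation to convergence, even in norm.
-/

section EnergyIdentity

variable {E : Type*} [NormedAddCommGroup E] [InnerProductSpace ℝ E]

theorem MeasureTheory.IntegrableOn.inner_of_continuousOn {μ : Measure ℝ} {K : Set ℝ} {w f : ℝ → E}
    (hw : IntegrableOn w K μ) (hf : ContinuousOn f K) (hK : IsCompact K) :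
    IntegrableOn (fun r => ⟪w r, f r⟫) K μ := by
  obtain ⟨C, hC⟩ := hK.exists_bound_of_continuousOn hf
  refine Integrable.mono' (hw.norm.mul_const C)
    (hw.aestronglyMeasurable.inner (hf.aestronglyMeasurable hK.measurableSet)) ?_
  filter_upwards [ae_restrict_mem hK.measurableSet] with r hr
  exact (norm_inner_le_norm _ _).trans (mul_le_mul_of_nonneg_left (hC r hr) (norm_nonneg _))

theorem integral_Ioc_integral_Ioc_eq_integral_Ioc_integral_Icc {g : ℝ → ℝ → ℝ} {s t : ℝ}
    (hg : Integrable (Function.uncurry g)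
      ((volume.restrict (Ioc s t)).prod (volume.restrict (Ioc s t)))) :
    ∫ r in Ioc s t, ∫ u in Ioc s r, g r u = ∫ u in Ioc s t, ∫ r in Icc u t, g r u := by
  have hF : Integrable (Function.uncurry fun r u => (Iic r).indicator (g r) u)
      ((volume.restrict (Ioc s t)).prod (volume.restrict (Ioc s t))) := by
    have : (Function.uncurry fun r u => (Iic r).indicator (g r) u)
        = {p : ℝ × ℝ | p.2 ≤ p.1}.indicator (Function.uncurry g) := by
      ext ⟨r, u⟩; simp only [Function.uncurry_apply_pair, indicator_apply, mem_Iic, mem_ofPred_eq]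
    rw [this]
    exact hg.indicator (measurableSet_le measurable_snd measurable_fst)
  have hswap := integral_integral_swap hF
  simp only [integral_indicator measurableSet_Iic,
    Measure.restrict_restrict measurableSet_Iic] at hswap
  have hflip : ∀ u, (fun r => (Iic r).indicator (g r) u) = (Ici u).indicator (fun r => g r u) := by
    intro u; ext r; simp only [indicator_apply, mem_Iic, mem_Ici]
  simp only [hflip, integral_indicator measurableSet_Ici,
    Measure.restrict_restrict measurableSet_Ici] at hswap
  convert hswap using 1
  · refine setIntegral_congr_fun measurableSet_Ioc fun r hr => ?_
    rw [Iic_inter_Ioc_of_le hr.2]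
  · refine setIntegral_congr_fun measurableSet_Ioc fun u hu => ?_
    have : Ici u ∩ Ioc s t = Icc u t := by
      ext r
      simp only [mem_inter_iff, mem_Ici, mem_Ioc, mem_Icc]
      exact ⟨fun h => ⟨h.1, h.2.2⟩, fun h => ⟨h.1, hu.1.trans_le h.1, h.2⟩⟩
    rw [this]

variable [CompleteSpace E]

theorem intervalIntegral_inner_left {w : ℝ → E} {s t : ℝ} (hw : IntervalIntegrable w volume s t)
    (c : E) : ∫ r in s..t, ⟪w r, c⟫ = ⟪∫ r in s..t, w r, c⟫ := by
  simp_rw [real_inner_comm c]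
  exact (innerSL ℝ c).intervalIntegral_comp_comm hw

/-- Both sides are the integral of `⟪w r, w u⟫` over one half of the square `(s, t]²`; they agree
by Fubini. This replaces the chain rule for `½‖∫ u in s..r, w u‖²`, which is not differentiable
everywhere when `w` is merely integrable. -/
theorem integral_inner_primitive_eq_integral_inner_primitive_right {w : ℝ → E} {s t : ℝ}
    (hst : s ≤ t) (hw : IntegrableOn w (Icc s t)) :
    ∫ r in s..t, ⟪w r, ∫ u in s..r, w u⟫ = ∫ r in s..t, ⟪w r, ∫ u in r..t, w u⟫ := by
  have hwIoc : IntegrableOn w (Ioc s t) := hw.mono_set Ioc_subset_Icc_self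
  have hprod : Integrable (Function.uncurry fun r u => ⟪w r, w u⟫)
      ((volume.restrict (Ioc s t)).prod (volume.restrict (Ioc s t))) :=
    (hwIoc.norm.mul_prod hwIoc.norm).mono'
      (hwIoc.aestronglyMeasurable.comp_fst.inner hwIoc.aestronglyMeasurable.comp_snd)
      (Eventually.of_forall fun p => norm_inner_le_norm _ _)
  rw [intervalIntegral.integral_of_le hst, intervalIntegral.integral_of_le hst]
  convert integral_Ioc_integral_Ioc_eq_integral_Ioc_integral_Icc hprod using 1
  · refine setIntegral_congr_fun measurableSet_Ioc fun r hr => ?_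
    rw [intervalIntegral.integral_of_le hr.1.le,
      integral_inner (hwIoc.mono_set (Ioc_subset_Ioc_right hr.2))]
  · refine setIntegral_congr_fun measurableSet_Ioc fun u hu => ?_
    rw [intervalIntegral.integral_of_le hu.2, ← integral_Icc_eq_integral_Ioc,
      ← integral_inner (hw.mono_set (Icc_subset_Icc_left hu.1.le))]
    simp_rw [real_inner_comm (w u)]

theorem integral_inner_primitive {w : ℝ → E} {s t : ℝ} (hst : s ≤ t)
    (hw : IntegrableOn w (Icc s t)) :
    ∫ r in s..t, ⟪w r, ∫ u in s..r, w u⟫ = ‖∫ r in s..t, w r‖ ^ 2 / 2 := by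
  have hsub : ∀ a ∈ Icc s t, ∀ b ∈ Icc s t, IntervalIntegrable w volume a b := fun a ha b hb =>
    (hw.mono_set (uIcc_subset_Icc ha hb)).intervalIntegrable
  have hw' : IntegrableOn w (uIcc s t) := by rwa [uIcc_of_le hst]
  have hint : ∀ f : ℝ → E, ContinuousOn f (uIcc s t) →
      IntervalIntegrable (fun r => ⟪w r, f r⟫) volume s t := fun f hf =>
    (hw'.inner_of_continuousOn hf isCompact_uIcc).intervalIntegrable
  have hsum : (∫ r in s..t, ⟪w r, ∫ u in s..r, w u⟫) + ∫ r in s..t, ⟪w r, ∫ u in r..t, w u⟫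
      = ‖∫ r in s..t, w r‖ ^ 2 := by
    rw [← intervalIntegral.integral_add
      (hint _ (intervalIntegral.continuousOn_primitive_interval hw'))
      (hint _ (intervalIntegral.continuousOn_primitive_interval_left hw'))]
    calc ∫ r in s..t, ⟪w r, ∫ u in s..r, w u⟫ + ⟪w r, ∫ u in r..t, w u⟫
        = ∫ r in s..t, ⟪w r, ∫ u in s..t, w u⟫ := by
          refine intervalIntegral.integral_congr fun r hr => ?_
          rw [uIcc_of_le hst] at hr
          rw [← inner_add_right, intervalIntegral.integral_add_adjacent_intervals
            (hsub s (left_mem_Icc.2 hst) r hr) (hsub r hr t (right_mem_Icc.2 hst))]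
      _ = ‖∫ r in s..t, w r‖ ^ 2 := by
          rw [intervalIntegral_inner_left (hw'.intervalIntegrable), real_inner_self_eq_norm_sq]
  linarith [integral_inner_primitive_eq_integral_inner_primitive_right hst hw]

theorem norm_sub_sq_sub_norm_sub_sq_eq_integral {x x' : ℝ → E} {s t : ℝ} (z : E) (hst : s ≤ t)
    (hx' : IntegrableOn x' (Icc s t)) (hx : ∀ r ∈ Icc s t, x r = x s + ∫ u in s..r, x' u) :
    ‖x t - z‖ ^ 2 - ‖x s - z‖ ^ 2 = 2 * ∫ r in s..t, ⟪x' r, x r - z⟫ := by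
  have hx'' : IntegrableOn x' (uIcc s t) := by rwa [uIcc_of_le hst]
  have hsplit : ∫ r in s..t, ⟪x' r, x r - z⟫
      = (∫ r in s..t, ⟪x' r, x s - z⟫) + ∫ r in s..t, ⟪x' r, ∫ u in s..r, x' u⟫ := by
    rw [← intervalIntegral.integral_add
      (hx''.inner_of_continuousOn continuousOn_const isCompact_uIcc).intervalIntegrable
      (hx''.inner_of_continuousOn (intervalIntegral.continuousOn_primitive_interval hx'')
        isCompact_uIcc).intervalIntegrable]
    refine intervalIntegral.integral_congr fun r hr => ?_
    rw [uIcc_of_le hst] at hr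
    simp only [hx r hr, ← inner_add_right]
    congr 1; abel
  rw [hsplit, intervalIntegral_inner_left hx''.intervalIntegrable, integral_inner_primitive hst hx',
    ← sub_eq_iff_eq_add'.mpr (hx t ⟨hst, le_rfl⟩)]
  have : x t - z = (x t - x s) + (x s - z) := by abel
  rw [this, norm_add_sq_real]
  ring

end EnergyIdentity

section

theorem eq_iInf_of_mem_ArgMin {α : Type*} {f : α → EReal} {z : α} (hz : z ∈ ArgMin f) :
    f z = ⨅ y, f y :=
  le_antisymm (le_iInf hz) (iInf_le f z)

theorem eq_iInf_of_mem_ArgMin_of_mem {α : Type*} {f : α → EReal} {C : Set α} {z : α}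
    (hz : z ∈ ArgMin f) (hzC : z ∈ C) : f z = ⨅ y : C, f y :=
  le_antisymm (le_iInf fun y => hz y) (iInf_le (fun y : C => f y) ⟨z, hzC⟩)

theorem LowerSemicontinuous.le_zero_of_tendsto {X ι : Type*} [TopologicalSpace X]
    {f : X → EReal} (hf : LowerSemicontinuous f) {l : Filter ι} [l.NeBot] {y : ι → X}
    {ε : ι → ℝ} {p : X} (hy : Tendsto y l (𝓝 p)) (hε : Tendsto ε l (𝓝 0))
    (hle : ∀ i, f (y i) ≤ ε i) : f p ≤ 0 := by
  refine EReal.le_of_forall_lt_iff_le.1 fun δ hδ => ?_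
  have hδ : ∀ᶠ i in l, ε i ≤ δ := hε.eventually (ge_mem_nhds (EReal.coe_pos.1 hδ))
  exact (hf.isClosed_preimage δ).mem_of_tendsto hy
    (hδ.mono fun i hi => (hle i).trans (EReal.coe_le_coe_iff.2 hi))

theorem tendsto_of_antitoneOn_norm_sub {E : Type*} [SeminormedAddCommGroup E] {x : ℝ → E}
    {p : E} (hanti : AntitoneOn (fun t => ‖x t - p‖) (Ici 0)) (hp : p ∈ closure (x '' Ici 0)) :
    Tendsto x atTop (𝓝 p) := by
  refine Metric.tendsto_atTop.2 fun ε hε => ?_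
  obtain ⟨_, ⟨s, hs, rfl⟩, hsε⟩ := Metric.mem_closure_iff.1 hp ε hε
  refine ⟨s, fun t hst => ?_⟩
  rw [dist_comm, dist_eq_norm] at hsε
  rw [dist_eq_norm]
  exact (hanti hs (mem_Ici.2 (le_trans hs hst)) hst).trans_lt hsε

theorem InfCompact.exists_mem_closure_image_le_zero {E : Type*} [NormedAddCommGroup E]
    {Φ Ψ : E → EReal}
    (hcompact : InfCompact (fun y => Ψ y + Φ y)) (hΨ : LowerSemicontinuous Ψ)
    (hΦ : LowerSemicontinuous Φ) {x : ℝ → E} {R : ℝ} (hR : ∀ t ≥ 0, ‖x t‖ ≤ R)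
    (hsmall : ∀ ε : ℝ, 0 < ε → ∃ τ ≥ 0, Φ (x τ) ≤ ε ∧ Ψ (x τ) ≤ ε) :
    ∃ p ∈ closure (x '' Ici 0), Ψ p ≤ 0 ∧ Φ p ≤ 0 := by
  choose τ hτ0 hτΦ hτΨ using fun n : ℕ => hsmall (1 / ((n : ℝ) + 1)) Nat.one_div_pos_of_nat
  have hle_one : ∀ n : ℕ, ((1 / ((n : ℝ) + 1) : ℝ) : EReal) ≤ ((1 : ℝ) : EReal) := fun n =>
    EReal.coe_le_coe_iff.2 <|
      div_le_one_of_le₀ (by linarith [n.cast_nonneg (α := ℝ)]) (by positivity)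
  have hlevel : ∀ n, Ψ (x (τ n)) + Φ (x (τ n)) ≤ ((2 : ℝ) : EReal) := fun n => by
    rw [show (2 : ℝ) = 1 + 1 by norm_num, EReal.coe_add]
    exact add_le_add ((hτΨ n).trans (hle_one n)) ((hτΦ n).trans (hle_one n))
  obtain ⟨p, -, φ, hφ, hp⟩ := (hcompact (max R 1) (by positivity) 2).tendsto_subseq
    (x := x ∘ τ) fun n => subset_closure ⟨(hR _ (hτ0 n)).trans (le_max_left _ _), hlevel n⟩
  have hε : Tendsto (fun k => 1 / ((φ k : ℝ) + 1)) atTop (𝓝 0) :=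
    tendsto_one_div_add_atTop_nhds_zero_nat.comp hφ.tendsto_atTop
  exact ⟨p, mem_closure_of_tendsto hp (Eventually.of_forall fun k => mem_image_of_mem x (hτ0 _)),
    hΨ.le_zero_of_tendsto hp hε fun k => hτΨ _, hΦ.le_zero_of_tendsto hp hε fun k => hτΦ _⟩

variable {E : Type*} [NormedAddCommGroup E] [InnerProductSpace ℝ E]

theorem exists_coe_eq_le_inner_of_mem_ESubdiff {f : E → EReal} {y z u : E}
    (hf : ∀ y, 0 ≤ f y) (hz : f z = 0) (hu : u ∈ ESubdiff f y) :
    ∃ a : ℝ, f y = a ∧ 0 ≤ a ∧ a ≤ ⟪u, y - z⟫ := by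
  have hyz : f y + ((⟪u, z - y⟫ : ℝ) : EReal) ≤ 0 := hz ▸ hu z
  have htop : f y ≠ ⊤ := fun h => by simp [h] at hyz
  obtain ⟨a, ha⟩ : ∃ a : ℝ, f y = a :=
    ⟨(f y).toReal, (EReal.coe_toReal htop (ne_bot_of_le_ne_bot EReal.zero_ne_bot (hf y))).symm⟩
  rw [ha, ← EReal.coe_add, ← EReal.coe_zero, EReal.coe_le_coe_iff] at hyz
  have ha0 := hf y
  rw [ha, ← EReal.coe_zero, EReal.coe_le_coe_iff] at ha0
  have : ⟪u, z - y⟫ = -⟪u, y - z⟫ := by rw [← inner_neg_right, neg_sub]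
  exact ⟨a, ha, ha0, by linarith⟩

end

namespace LocAC

variable {E : Type*} [NormedAddCommGroup E] [InnerProductSpace ℝ E] {x x' : ℝ → E} {s t : ℝ}

theorem integrableOn_Icc (hx : LocAC x x') (hs : 0 ≤ s) : IntegrableOn x' (Icc s t) :=
  (hx.1 t).mono_set (Icc_subset_Icc_left hs)

theorem eq_add_integral (hx : LocAC x x') (hs : 0 ≤ s) (hst : s ≤ t) :
    x t = x s + ∫ u in s..t, x' u := by
  have hii : ∀ {a b : ℝ}, 0 ≤ a → a ≤ b → IntervalIntegrable x' volume a b := fun ha hab =>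
    ((hx.integrableOn_Icc ha).mono_set (uIcc_of_le hab).subset).intervalIntegrable
  rw [hx.2 t (hs.trans hst), hx.2 s hs, add_assoc,
    intervalIntegral.integral_add_adjacent_intervals (hii le_rfl hs) (hii hs hst)]

theorem continuousOn_s11 (hx : LocAC x x') (hs : 0 ≤ s) (hst : s ≤ t) : ContinuousOn x (Icc s t) := by
  have hprim := intervalIntegral.continuousOn_primitive_interval
    (show IntegrableOn x' (uIcc s t) by rw [uIcc_of_le hst]; exact hx.integrableOn_Icc hs)
  rw [uIcc_of_le hst] at hprim
  exact (continuousOn_const.add hprim).congr fun r hr => hx.eq_add_integral hs hr.1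

variable [CompleteSpace E]

theorem norm_sub_sq_le (hx : LocAC x x') (z : E) (hs : 0 ≤ s) (hst : s ≤ t) {c : ℝ}
    (h : ∀ᵐ r ∂volume.restrict (Ioc s t), ⟪x' r, x r - z⟫ ≤ -c) :
    ‖x t - z‖ ^ 2 ≤ ‖x s - z‖ ^ 2 - 2 * c * (t - s) := by
  have hint : IntegrableOn (fun r => ⟪x' r, x r - z⟫) (Ioc s t) :=
    ((hx.integrableOn_Icc hs).inner_of_continuousOn
      ((hx.continuousOn_s11 hs hst).sub continuousOn_const) isCompact_Icc).mono_set Ioc_subset_Icc_self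
  have hbound : ∫ r in s..t, ⟪x' r, x r - z⟫ ≤ -c * (t - s) := by
    rw [intervalIntegral.integral_of_le hst]
    calc ∫ r in Ioc s t, ⟪x' r, x r - z⟫ ≤ ∫ _ in Ioc s t, -c :=
          integral_mono_ae hint (integrableOn_const measure_Ioc_lt_top.ne) h
      _ = -c * (t - s) := by
          simp [measureReal_def, Real.volume_Ioc, hst]; ring
  have := norm_sub_sq_sub_norm_sub_sq_eq_integral z hst (hx.integrableOn_Icc hs)
    fun r hr => hx.eq_add_integral hs hr.1
  linarith

theorem antitoneOn_norm_sub (hx : LocAC x x') {z : E}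
    (h : ∀ᵐ r ∂volume.restrict (Ioi 0), ⟪x' r, x r - z⟫ ≤ 0) :
    AntitoneOn (fun t => ‖x t - z‖) (Ici 0) := by
  intro s hs t _ hst
  have hsq := hx.norm_sub_sq_le z hs hst (c := 0) (by
    simpa using ae_restrict_of_ae_restrict_of_subset
      (fun r (hr : r ∈ Ioc s t) => (mem_Ici.1 hs).trans_lt hr.1) h)
  simp only [mul_zero, zero_mul, sub_zero] at hsq
  exact (pow_le_pow_iff_left₀ (norm_nonneg _) (norm_nonneg _) two_ne_zero).1 hsq

end LocAC

section MultiscaleTrajectory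

variable {E : Type*} [NormedAddCommGroup E] [InnerProductSpace ℝ E]
  {Φ Ψ : E → EReal} {β : ℝ → ℝ} {x x' : ℝ → E} {z : E}

theorem ae_inner_deriv_sub_le (hΦ : ∀ y, 0 ≤ Φ y) (hΨ : ∀ y, 0 ≤ Ψ y)
    (hβ : ∀ t : ℝ, 0 ≤ t → 0 ≤ β t)
    (hsol : ∀ᵐ t ∂(volume.restrict (Ioi (0:ℝ))),
      ∃ u ∈ ESubdiff Φ (x t), ∃ v ∈ ESubdiff Ψ (x t), x' t = -(u + β t • v))
    (hΦz : Φ z = 0) (hΨz : Ψ z = 0) :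
    ∀ᵐ t ∂(volume.restrict (Ioi (0:ℝ))), ∃ a b : ℝ, Φ (x t) = a ∧ Ψ (x t) = b ∧
      0 ≤ a ∧ 0 ≤ b ∧ 0 ≤ β t ∧ ⟪x' t, x t - z⟫ ≤ -(a + β t * b) := by
  filter_upwards [hsol, ae_restrict_mem measurableSet_Ioi] with t ⟨u, hu, v, hv, hx't⟩ ht
  obtain ⟨a, ha, ha0, hau⟩ := exists_coe_eq_le_inner_of_mem_ESubdiff hΦ hΦz hu
  obtain ⟨b, hb, hb0, hbv⟩ := exists_coe_eq_le_inner_of_mem_ESubdiff hΨ hΨz hv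
  have hβt := hβ t ht.le
  refine ⟨a, b, ha, hb, ha0, hb0, hβt, ?_⟩
  rw [hx't, inner_neg_left, inner_add_left, real_inner_smul_left]
  nlinarith [mul_le_mul_of_nonneg_left hbv hβt]

theorem ae_inner_deriv_sub_nonpos (hΦ : ∀ y, 0 ≤ Φ y) (hΨ : ∀ y, 0 ≤ Ψ y)
    (hβ : ∀ t : ℝ, 0 ≤ t → 0 ≤ β t)
    (hsol : ∀ᵐ t ∂(volume.restrict (Ioi (0:ℝ))),
      ∃ u ∈ ESubdiff Φ (x t), ∃ v ∈ ESubdiff Ψ (x t), x' t = -(u + β t • v))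
    (hΦz : Φ z = 0) (hΨz : Ψ z = 0) :
    ∀ᵐ t ∂(volume.restrict (Ioi (0:ℝ))), ⟪x' t, x t - z⟫ ≤ 0 := by
  filter_upwards [ae_inner_deriv_sub_le hΦ hΨ hβ hsol hΦz hΨz] with t ⟨a, b, _, _, ha, hb, hβt, h⟩
  nlinarith [mul_nonneg hβt hb]

theorem LocAC.exists_values_le [CompleteSpace E] (hx : LocAC x x')
    (hβtop : Tendsto β atTop atTop) (hΦ : ∀ y, 0 ≤ Φ y) (hΨ : ∀ y, 0 ≤ Ψ y)
    (hβ : ∀ t : ℝ, 0 ≤ t → 0 ≤ β t)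
    (hsol : ∀ᵐ t ∂(volume.restrict (Ioi (0:ℝ))),
      ∃ u ∈ ESubdiff Φ (x t), ∃ v ∈ ESubdiff Ψ (x t), x' t = -(u + β t • v))
    (hΦz : Φ z = 0) (hΨz : Ψ z = 0) {ε : ℝ} (hε : 0 < ε) :
    ∃ τ ≥ 0, Φ (x τ) ≤ ε ∧ Ψ (x τ) ≤ ε := by
  by_contra! hlarge
  obtain ⟨T, hT⟩ := eventually_atTop.1 (hβtop.eventually_ge_atTop 1)
  set s := max T 0
  set t := s + ‖x s - z‖ ^ 2 / (2 * ε) + 1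
  have hs : 0 ≤ s := le_max_right T 0
  have hst : s ≤ t := by
    have : 0 ≤ ‖x s - z‖ ^ 2 / (2 * ε) := by positivity
    linarith
  have hdecay : ∀ᵐ r ∂volume.restrict (Ioc s t), ⟪x' r, x r - z⟫ ≤ -ε := by
    filter_upwards [ae_restrict_of_ae_restrict_of_subset
        (fun r (hr : r ∈ Ioc s t) => hs.trans_lt hr.1)
        (ae_inner_deriv_sub_le hΦ hΨ hβ hsol hΦz hΨz),
      ae_restrict_mem measurableSet_Ioc] with r ⟨a, b, ha, hb, ha0, hb0, _, h⟩ hr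
    have hβr : 1 ≤ β r := hT r ((le_max_left T 0).trans hr.1.le)
    rcases le_or_gt a ε with haε | haε
    · have hbε : ε < b := by
        have := hlarge r (hs.trans hr.1.le) (ha ▸ EReal.coe_le_coe_iff.2 haε)
        rwa [hb, EReal.coe_lt_coe_iff] at this
      nlinarith
    · nlinarith
  have hsq := hx.norm_sub_sq_le z hs hst hdecay
  have : 2 * ε * (t - s) = ‖x s - z‖ ^ 2 + 2 * ε := by
    simp only [t]; field_simp; ring
  nlinarith [sq_nonneg ‖x t - z‖]

end MultiscaleTrajectory

theorem multiscale_gradient_nonempty_intersection_general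
    (Ψ Φ : H → EReal)
    (hΨlsc : LowerSemicontinuous Ψ)
    (hΨinf : (⨅ y : H, Ψ y) = (0 : EReal))
    (hΦlsc : LowerSemicontinuous Φ)
    (hΦinf : (⨅ y : ArgMin Ψ, Φ (y : H)) = (0 : EReal))
    (hSne : (ArgMin Ψ ∩ ArgMin Φ).Nonempty)
    (hcompact : InfCompact (fun y : H => Ψ y + Φ y))
    (β : ℝ → ℝ) (hβnonneg : ∀ t : ℝ, 0 ≤ t → 0 ≤ β t) (hβtop : Tendsto β atTop atTop)
    (x x' : ℝ → H) (hx : LocAC x x')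
    (hsol : ∀ᵐ t ∂(volume.restrict (Ioi (0:ℝ))),
      ∃ u ∈ ESubdiff Φ (x t), ∃ v ∈ ESubdiff Ψ (x t), x' t = -(u + β t • v)) :
    ∃ xlim ∈ ArgMin Ψ ∩ ArgMin Φ, WeakConv x xlim := by
  obtain ⟨z, hzΨ, hzΦ⟩ := hSne
  have hΨz : Ψ z = 0 := hΨinf ▸ eq_iInf_of_mem_ArgMin hzΨ
  have hΦz : Φ z = 0 := hΦinf ▸ eq_iInf_of_mem_ArgMin_of_mem hzΦ hzΨ
  have hΨ0 : ∀ y, 0 ≤ Ψ y := hΨz ▸ hzΨ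
  have hΦ0 : ∀ y, 0 ≤ Φ y := hΦz ▸ hzΦ
  have hanti : ∀ w, Φ w = 0 → Ψ w = 0 → AntitoneOn (fun t => ‖x t - w‖) (Ici 0) :=
    fun w hΦw hΨw =>
      hx.antitoneOn_norm_sub (ae_inner_deriv_sub_nonpos hΦ0 hΨ0 hβnonneg hsol hΦw hΨw)
  have hbdd : ∀ t ≥ 0, ‖x t‖ ≤ ‖x 0 - z‖ + ‖z‖ := fun t ht => by
    have := hanti z hΦz hΨz (mem_Ici.2 le_rfl) ht ht
    linarith [norm_le_insert' (x t) z]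
  obtain ⟨p, hp, hpΨ, hpΦ⟩ := hcompact.exists_mem_closure_image_le_zero hΨlsc hΦlsc hbdd
    fun ε hε => hx.exists_values_le hβtop hΦ0 hΨ0 hβnonneg hsol hΦz hΨz hε
  replace hpΨ : Ψ p = 0 := le_antisymm hpΨ (hΨ0 p)
  replace hpΦ : Φ p = 0 := le_antisymm hpΦ (hΦ0 p)
  have hlim : Tendsto x atTop (𝓝 p) := tendsto_of_antitoneOn_norm_sub (hanti p hpΦ hpΨ) hp
  exact ⟨p, ⟨fun y => hpΨ ▸ hΨ0 y, fun y => hpΦ ▸ hΦ0 y⟩, fun y => hlim.inner tendsto_const_nhds⟩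

/-- if `argmin Ψ ∩ argmin Φ` is nonempty and bounded, every trajectory of
`ẋ(t) + ∂Φ(x(t)) + β(t)∂Ψ(x(t)) ∋ 0` with `β(t) → +∞` converges weakly to a point of
`argmin Ψ ∩ argmin Φ`. -/
theorem multiscale_gradient_nonempty_intersection
    (Ψ Φ : H → EReal)
    (hΨlsc : LowerSemicontinuous Ψ) (hΨconv : EConvex Ψ)
    (hΨproper : (∀ x : H, Ψ x ≠ ⊥) ∧ ∃ x : H, Ψ x ≠ ⊤)
    (hΨinf : (⨅ y : H, Ψ y) = (0 : EReal)) (hCne : (ArgMin Ψ).Nonempty)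
    (hΦlsc : LowerSemicontinuous Φ) (hΦconv : EConvex Φ)
    (hΦproper : (∀ x : H, Φ x ≠ ⊥) ∧ ∃ x : H, Φ x ≠ ⊤)
    (hΦinf : (⨅ y : ArgMin Ψ, Φ (y : H)) = (0 : EReal))
    (hSCne : (ArgMinOn Φ (ArgMin Ψ)).Nonempty)
    (hSne : (ArgMin Ψ ∩ ArgMin Φ).Nonempty)
    (hSbd : Bornology.IsBounded (ArgMin Ψ ∩ ArgMin Φ))
    (hcompact : InfCompact (fun y : H => Ψ y + Φ y))
    (β : ℝ → ℝ) (hβnonneg : ∀ t : ℝ, 0 ≤ t → 0 ≤ β t) (hβtop : Tendsto β atTop atTop)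
    (x x' : ℝ → H) (hx : LocAC x x')
    (hsol : ∀ᵐ t ∂(volume.restrict (Ioi (0:ℝ))),
      ∃ u ∈ ESubdiff Φ (x t), ∃ v ∈ ESubdiff Ψ (x t), x' t = -(u + β t • v)) :
    ∃ xlim ∈ ArgMin Ψ ∩ ArgMin Φ, WeakConv x xlim :=
  multiscale_gradient_nonempty_intersection_general Ψ Φ hΨlsc hΨinf hΦlsc hΦinf hSne hcompact β
    hβnonneg hβtop x x' hx hsol
end

section
/- Assume (H_Ψ): Ψ : H → ℝ ∪ {+∞} is a closed convex proper function with inf_H Ψ = 0 and C = argmin Ψ ≠ ∅; and (H_Φ): Φ : H → ℝ ∪ {+∞} is a closed convex proper function with inf_C Φ = 0 and argmin_C Φ ≠ ∅. Define ω(ε) = inf_{x∈H} (Ψ(x) + εΦ(x)) for ε ≥ 0. Then: (a) ω is nonpositive, nonincreasing and concave on [0,+∞). If moreover the function Ψ + Φ is coercive, then: (b) for every ε ∈ [0,1], ω(ε) > −∞ and the infimum defining ω(ε) is attained; (c) lim_{ε→0⁺} ω(ε)/ε = 0, i.e., the asymptotic expansion min_H(Ψ + εΦ) = min_H Ψ +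 ε·min_C Φ + o(ε) holds as ε → 0. -/
open MeasureTheory Set Filter Topology ENNReal RealInnerProductSpace

variable {H : Type*} [NormedAddCommGroup H] [InnerProductSpace ℝ H] [CompleteSpace H]

/-!
For `e ≥ 0`, `ω(e)` is an infimum of the functions `e ↦ Ψ x + e Φ x`, which are affine on
`[0, ∞)`, so `ω` is concave; a point of `argmin_C Φ` gives `ω ≤ 0 = ω 0`, whence `ω` is
nonincreasing. For `0 < e ≤ 1`, `Ψ + eΦ ≥ e (Ψ + Φ)` is coercive, and a coercive closed convex
function on a Hilbert space attains its infimum because decreasing closed convex bounded sets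
have nonempty intersection. By concavity, `ω(e)/e` is nonincreasing, so `ω(e)/e → 0` fails only if
`ω(e) < -δe` for some `δ > 0` and all small `e`. The corresponding near-minimizers then stay
bounded, satisfy `Φ < -δ`, and `Ψ = O(e)`; the same intersection argument produces a point of `C`
with `Φ ≤ -δ < 0 = inf_C Φ`.
-/

namespace EReal

lemma coe_mul_ne_bot {c : ℝ} (hc : 0 ≤ c) {a : EReal} (ha : a ≠ ⊥) : (c : EReal) * a ≠ ⊥ :=
  (mul_ne_bot _ _).2
    ⟨Or.inl (coe_ne_bot c), Or.inr ha, Or.inl (coe_ne_top c), Or.inl (EReal.coe_nonneg.2 hc)⟩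

lemma continuous_coe_mul {c : ℝ} (hc : c ≠ 0) : Continuous fun z : EReal => (c : EReal) * z := by
  have hc' : (c : EReal) ≠ 0 := by exact_mod_cast hc
  refine continuous_iff_continuousAt.2 fun z => ?_
  exact (continuousAt_mul (p := ((c : EReal), z)) (Or.inl hc') (Or.inl hc')
    (Or.inl (coe_ne_bot c)) (Or.inl (coe_ne_top c))).comp (Continuous.continuousAt (by fun_prop))

lemma le_coe_mul_of_nonpos {t : EReal} (ht : t ≤ 0) {c : ℝ} (hc₀ : 0 ≤ c) (hc₁ : c ≤ 1) :
    t ≤ c * t := by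
  have hc : 0 ≤ 1 - c := by linarith
  calc t = ((c + (1 - c) : ℝ) : EReal) * t := by simp
    _ = c * t + ((1 - c : ℝ) : EReal) * t := by
      rw [coe_add, right_distrib_of_nonneg (EReal.coe_nonneg.2 hc₀) (EReal.coe_nonneg.2 hc)]
    _ ≤ c * t + 0 := by
      gcongr
      simpa using mul_le_mul_of_nonneg_left ht (EReal.coe_nonneg.2 hc)
    _ = c * t := add_zero _

lemma convexComb_add_coe_mul (a b : EReal) {lam e₁ e₂ : ℝ} (hlam₀ : 0 ≤ lam) (hlam₁ : lam ≤ 1)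
    (he₁ : 0 ≤ e₁) (he₂ : 0 ≤ e₂) :
    (lam : EReal) * (a + e₁ * b) + ((1 - lam : ℝ) : EReal) * (a + e₂ * b) =
      a + ((lam * e₁ + (1 - lam) * e₂ : ℝ) : EReal) * b := by
  have hmu : 0 ≤ 1 - lam := by linarith
  rw [left_distrib_of_nonneg_of_ne_top (EReal.coe_nonneg.2 hlam₀) (coe_ne_top _),
    left_distrib_of_nonneg_of_ne_top (EReal.coe_nonneg.2 hmu) (coe_ne_top _),
    ← mul_assoc, ← mul_assoc, ← coe_mul, ← coe_mul, add_add_add_comm,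
    ← right_distrib_of_nonneg (EReal.coe_nonneg.2 hlam₀) (EReal.coe_nonneg.2 hmu),
    ← right_distrib_of_nonneg (EReal.coe_nonneg.2 (mul_nonneg hlam₀ he₁))
      (EReal.coe_nonneg.2 (mul_nonneg hmu he₂)), ← coe_add, ← coe_add]
  simp

end EReal

section Semicontinuity

variable {α : Type*} [TopologicalSpace α] {f g : α → EReal}

lemma LowerSemicontinuous.coe_mul_ereal (hf : LowerSemicontinuous f) {c : ℝ} (hc : 0 ≤ c) :
    LowerSemicontinuous fun x => (c : EReal) * f x := by
  rcases hc.eq_or_lt with rfl | hc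
  · simpa using lowerSemicontinuous_const
  · exact (EReal.continuous_coe_mul hc.ne').comp_lowerSemicontinuous hf
      fun _ _ h => mul_le_mul_of_nonneg_left h (EReal.coe_nonneg.2 hc.le)

lemma LowerSemicontinuous.add_ereal (hf : LowerSemicontinuous f) (hg : LowerSemicontinuous g)
    (hf_bot : ∀ x, f x ≠ ⊥) (hg_bot : ∀ x, g x ≠ ⊥) :
    LowerSemicontinuous fun x => f x + g x :=
  hf.add' hg fun x => EReal.continuousAt_add (Or.inr (hg_bot x)) (Or.inl (hf_bot x))

end Semicontinuity

section Convexity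

variable {E : Type*} [AddCommGroup E] [Module ℝ E] {f g : E → EReal}

lemma EConvex.add (hf : EConvex f) (hg : EConvex g) : EConvex fun x => f x + g x := by
  intro x y a b ha hb hab
  calc f (a • x + b • y) + g (a • x + b • y)
      ≤ (a * f x + b * f y) + (a * g x + b * g y) :=
        add_le_add (hf x y a b ha hb hab) (hg x y a b ha hb hab)
    _ = a * (f x + g x) + b * (f y + g y) := by
      rw [EReal.left_distrib_of_nonneg_of_ne_top (EReal.coe_nonneg.2 ha) (EReal.coe_ne_top a),
        EReal.left_distrib_of_nonneg_of_ne_top (EReal.coe_nonneg.2 hb) (EReal.coe_ne_top b),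
        add_add_add_comm]

lemma EConvex.coe_mul (hf : EConvex f) {c : ℝ} (hc : 0 ≤ c) :
    EConvex fun x => (c : EReal) * f x := by
  intro x y a b ha hb hab
  calc (c : EReal) * f (a • x + b • y) ≤ c * (a * f x + b * f y) :=
        mul_le_mul_of_nonneg_left (hf x y a b ha hb hab) (EReal.coe_nonneg.2 hc)
    _ = a * (c * f x) + b * (c * f y) := by
      rw [EReal.left_distrib_of_nonneg_of_ne_top (EReal.coe_nonneg.2 hc) (EReal.coe_ne_top c),
        mul_left_comm, mul_left_comm (c : EReal)]

lemma EConvex.convex_le (hf : EConvex f) (t : EReal) : Convex ℝ {x | f x ≤ t} := by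
  intro x hx y hy a b ha hb hab
  calc f (a • x + b • y) ≤ a * f x + b * f y := hf x y a b ha hb hab
    _ ≤ a * t + b * t := add_le_add (mul_le_mul_of_nonneg_left hx (EReal.coe_nonneg.2 ha))
        (mul_le_mul_of_nonneg_left hy (EReal.coe_nonneg.2 hb))
    _ = t := by
      rw [← EReal.right_distrib_of_nonneg (EReal.coe_nonneg.2 ha) (EReal.coe_nonneg.2 hb),
        ← EReal.coe_add, hab, EReal.coe_one, one_mul]

end Convexity

lemma cauchySeq_of_dist_sq_le {α : Type*} [PseudoMetricSpace α] {p : ℕ → α} {a : ℕ → ℝ}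
    (ha : CauchySeq a) (h : ∀ n m, n ≤ m → dist (p n) (p m) ^ 2 ≤ a m - a n) : CauchySeq p := by
  rw [Metric.cauchySeq_iff'] at ha ⊢
  intro ε hε
  obtain ⟨N, hN⟩ := ha (ε ^ 2) (by positivity)
  refine ⟨N, fun n hn => ?_⟩
  have hsq : dist (p n) (p N) ^ 2 < ε ^ 2 := by
    rw [dist_comm]
    exact (h N n hn).trans_lt ((le_abs_self _).trans_lt (Real.dist_eq _ _ ▸ hN n hn))
  exact lt_of_pow_lt_pow_left₀ 2 hε.le hsq

/-- The points `p n` of minimal norm in the `K n` form a Cauchy sequence, since the variational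
inequality for `p n` gives `‖p m - p n‖² ≤ ‖p m‖² - ‖p n‖²` for `n ≤ m`. -/
theorem nonempty_iInter_of_antitone_convex_closed_bounded {E : Type*} [NormedAddCommGroup E]
    [InnerProductSpace ℝ E] [CompleteSpace E] {K : ℕ → Set E} (hK : Antitone K)
    (hne : ∀ n, (K n).Nonempty) (hconv : ∀ n, Convex ℝ (K n)) (hclosed : ∀ n, IsClosed (K n))
    (hbdd : Bornology.IsBounded (K 0)) : (⋂ n, K n).Nonempty := by
  choose p hpK hpmin using fun n =>
    exists_norm_eq_iInf_of_complete_convex (hne n) (hclosed n).isComplete (hconv n) 0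
  have hvar : ∀ n, ∀ w ∈ K n, 0 ≤ ⟪p n, w - p n⟫ := fun n w hw => by
    have := (norm_eq_iInf_iff_real_inner_le_zero (hconv n) (hpK n)).1 (hpmin n) w hw
    rwa [zero_sub, inner_neg_left, neg_nonpos] at this
  have hsq : ∀ n m, n ≤ m → dist (p n) (p m) ^ 2 ≤ ‖p m‖ ^ 2 - ‖p n‖ ^ 2 := fun n m hnm => by
    have := hvar n (p m) (hK hnm (hpK m))
    rw [inner_sub_right, real_inner_self_eq_norm_sq] at this
    rw [dist_eq_norm, norm_sub_sq_real]
    linarith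
  obtain ⟨R, hR⟩ := hbdd.exists_norm_le
  have hmono : Monotone fun n => ‖p n‖ ^ 2 :=
    monotone_nat_of_le_succ fun n => by
      linarith [hsq n (n + 1) n.le_succ, sq_nonneg (dist (p n) (p (n + 1)))]
  have hbddAbove : BddAbove (Set.range fun n => ‖p n‖ ^ 2) :=
    ⟨R ^ 2, Set.forall_mem_range.2 fun n => pow_le_pow_left₀ (norm_nonneg _)
      (hR _ (hK (Nat.zero_le n) (hpK n))) 2⟩
  obtain ⟨x, hx⟩ := cauchySeq_tendsto_of_complete
    (cauchySeq_of_dist_sq_le (tendsto_atTop_ciSup hmono hbddAbove).cauchySeq hsq)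
  refine ⟨x, Set.mem_iInter.2 fun n => (hclosed n).mem_of_tendsto hx ?_⟩
  filter_upwards [eventually_ge_atTop n] with m hm using hK hm (hpK m)

def ECoercive {E : Type*} [Norm E] (f : E → EReal) : Prop :=
  ∀ M : ℝ, ∃ R : ℝ, ∀ x : E, R ≤ ‖x‖ → (M : EReal) ≤ f x

section Minimization

variable {E : Type*} [NormedAddCommGroup E] [InnerProductSpace ℝ E] [CompleteSpace E]
  {f : E → EReal}

theorem EConvex.exists_mem_le_of_forall_lt (hf : EConvex f) (hlsc : LowerSemicontinuous f)
    {S : Set E} (hS : Convex ℝ S) (hSc : IsClosed S) (hSb : Bornology.IsBounded S) {L : EReal}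
    (hL : L ≠ ⊤) (h : ∀ t, L < t → ∃ x ∈ S, f x < t) : ∃ x ∈ S, f x ≤ L := by
  obtain ⟨u, hu_anti, hu_mem, hu_lim⟩ := exists_seq_strictAnti_tendsto' (lt_top_iff_ne_top.2 hL)
  let K n := S ∩ {x | f x ≤ u n}
  obtain ⟨x, hx⟩ := nonempty_iInter_of_antitone_convex_closed_bounded (K := K)
    (fun n m hnm => Set.inter_subset_inter_right S fun x hx => hx.trans (hu_anti.antitone hnm))
    (fun n => let ⟨x, hxS, hx⟩ := h (u n) (hu_mem n).1; ⟨x, hxS, hx.le⟩)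
    (fun n => hS.inter (hf.convex_le _)) (fun n => hSc.inter (hlsc.isClosed_preimage _))
    (hSb.subset Set.inter_subset_left)
  have hxK : ∀ n, x ∈ K n := Set.mem_iInter.1 hx
  exact ⟨x, (hxK 0).1, ge_of_tendsto' hu_lim fun n => (hxK n).2⟩

theorem EConvex.exists_forall_le_of_coercive (hf : EConvex f) (hlsc : LowerSemicontinuous f)
    (hcoer : ECoercive f) : ∃ x, ∀ y, f x ≤ f y := by
  by_cases hL : ⨅ y, f y = ⊤
  · exact ⟨0, fun y => by simp [iInf_eq_top.1 hL]⟩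
  obtain ⟨c, hLc, -⟩ := EReal.lt_iff_exists_real_btwn.1 (lt_top_iff_ne_top.2 hL)
  obtain ⟨R, hR⟩ := hcoer c
  obtain ⟨x, -, hx⟩ := hf.exists_mem_le_of_forall_lt hlsc (convex_closedBall 0 R)
    Metric.isClosed_closedBall Metric.isBounded_closedBall hL fun t ht => by
      obtain ⟨x, hx⟩ := iInf_lt_iff.1 (lt_min ht hLc)
      refine ⟨x, mem_closedBall_zero_iff.2 (le_of_not_ge fun hRx => ?_),
        hx.trans_le (min_le_left _ _)⟩
      exact (hR x hRx).not_gt (hx.trans_le (min_le_right _ _))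
  exact ⟨x, fun y => hx.trans (iInf_le f y)⟩

end Minimization

noncomputable def penalizedInf {α : Type*} (Ψ Φ : α → EReal) (e : ℝ) : EReal :=
  ⨅ y, Ψ y + (e : EReal) * Φ y

def EConcaveOnIci (g : ℝ → EReal) : Prop :=
  ∀ e₁ e₂ lam : ℝ, 0 ≤ e₁ → 0 ≤ e₂ → 0 ≤ lam → lam ≤ 1 →
    (lam : EReal) * g e₁ + ((1 - lam : ℝ) : EReal) * g e₂ ≤ g (lam * e₁ + (1 - lam) * e₂)

theorem penalizedInf_concave {α : Type*} (Ψ Φ : α → EReal) :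
    EConcaveOnIci (penalizedInf Ψ Φ) := fun e₁ e₂ lam he₁ he₂ hlam₀ hlam₁ =>
  le_iInf fun y => by
    rw [← EReal.convexComb_add_coe_mul _ _ hlam₀ hlam₁ he₁ he₂]
    exact add_le_add (mul_le_mul_of_nonneg_left (iInf_le _ y) (EReal.coe_nonneg.2 hlam₀))
      (mul_le_mul_of_nonneg_left (iInf_le _ y) (EReal.coe_nonneg.2 (by linarith)))

namespace EConcaveOnIci

variable {g : ℝ → EReal}

lemma coe_div_mul_le (hg : EConcaveOnIci g) (hg0 : g 0 = 0) {e e' : ℝ} (he : 0 ≤ e)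
    (hee' : e ≤ e') (he' : 0 < e') : ((e / e' : ℝ) : EReal) * g e' ≤ g e := by
  have h := hg e' 0 (e / e') he'.le le_rfl (div_nonneg he he'.le) ((div_le_one he').2 hee')
  rwa [hg0, mul_zero, add_zero, mul_zero, add_zero, div_mul_cancel₀ e he'.ne'] at h

lemma antitoneOn (hg : EConcaveOnIci g) (hg0 : g 0 = 0) (hle : ∀ e, 0 ≤ e → g e ≤ 0) :
    AntitoneOn g (Set.Ici 0) := by
  intro e (he : 0 ≤ e) e' (he' : 0 ≤ e') hee'
  rcases he'.eq_or_lt with rfl | he'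
  · rw [le_antisymm hee' he]
  calc g e' ≤ ((e / e' : ℝ) : EReal) * g e' :=
        EReal.le_coe_mul_of_nonpos (hle e' he'.le) (div_nonneg he he'.le) ((div_le_one he').2 hee')
    _ ≤ g e := hg.coe_div_mul_le hg0 he hee' he'

lemma tendsto_toReal_div (hg : EConcaveOnIci g) (hg0 : g 0 = 0) (hle : ∀ e, 0 ≤ e → g e ≤ 0)
    (hslope : ∀ δ > 0, ∃ e₀ > 0, ((-(δ * e₀) : ℝ) : EReal) ≤ g e₀) :
    Tendsto (fun e => (g e).toReal / e) (𝓝[>] 0) (𝓝 0) := by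
  refine Metric.tendsto_nhdsWithin_nhds.2 fun δ hδ => ?_
  obtain ⟨e₀, he₀, hge₀⟩ := hslope (δ / 2) (half_pos hδ)
  refine ⟨e₀, he₀, fun e (he : 0 < e) hee₀ => ?_⟩
  rw [Real.dist_eq, sub_zero] at hee₀ ⊢
  have hee₀ : e ≤ e₀ := (le_abs_self e).trans hee₀.le
  have hlow : ((-(δ / 2 * e) : ℝ) : EReal) ≤ g e :=
    calc ((-(δ / 2 * e) : ℝ) : EReal)
        = ((e / e₀ : ℝ) : EReal) * ((-(δ / 2 * e₀) : ℝ) : EReal) := by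
          rw [← EReal.coe_mul]; congr 1; field_simp
      _ ≤ ((e / e₀ : ℝ) : EReal) * g e₀ :=
          mul_le_mul_of_nonneg_left hge₀ (EReal.coe_nonneg.2 (div_nonneg he.le he₀.le))
      _ ≤ g e := hg.coe_div_mul_le hg0 he.le hee₀ he₀
  have hup := hle e he.le
  have hlow' : -(δ / 2 * e) ≤ (g e).toReal := by
    rw [← EReal.toReal_coe (-(δ / 2 * e))]
    exact EReal.toReal_le_toReal hlow (EReal.coe_ne_bot _) (hup.trans_lt EReal.zero_lt_top).ne
  have hup' : (g e).toReal ≤ 0 := EReal.toReal_nonpos hup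
  rw [abs_div, abs_of_pos he, div_lt_iff₀ he, abs_of_nonpos hup']
  nlinarith

end EConcaveOnIci

lemma EReal.exists_coe_of_add_coe_mul_lt {a b : EReal} (ha : a ≠ ⊥) (hb : b ≠ ⊥) {c t : ℝ}
    (hc : 0 < c) (h : a + c * b < t) : ∃ x y : ℝ, a = x ∧ b = y := by
  induction a <;> induction b <;> simp_all [EReal.coe_mul_top_of_pos hc, ← EReal.coe_mul]

lemma ECoercive.add_coe_mul {E : Type*} [Norm E] {Ψ Φ : E → EReal} (hΨ0 : ∀ x, 0 ≤ Ψ x)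
    (h : ECoercive fun x => Ψ x + Φ x) {e : ℝ} (he : 0 < e) (he₁ : e ≤ 1) :
    ECoercive fun x => Ψ x + e * Φ x := fun M => by
  obtain ⟨R, hR⟩ := h (M / e)
  refine ⟨R, fun x hx => ?_⟩
  calc (M : EReal) = e * ((M / e : ℝ) : EReal) := by
        rw [← EReal.coe_mul, mul_div_cancel₀ M he.ne']
    _ ≤ e * (Ψ x + Φ x) := mul_le_mul_of_nonneg_left (hR x hx) (EReal.coe_nonneg.2 he.le)
    _ = e * Ψ x + e * Φ x :=
      EReal.left_distrib_of_nonneg_of_ne_top (EReal.coe_nonneg.2 he.le) (EReal.coe_ne_top e) _ _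
    _ ≤ Ψ x + e * Φ x := by
      gcongr
      exact mul_le_of_le_one_left (hΨ0 x) (by exact_mod_cast he₁)

theorem exists_near_argMin_of_penalizedInf_lt {E : Type*} [Norm E] {Ψ Φ : E → EReal}
    (hΨ0 : ∀ x, 0 ≤ Ψ x) (hΦbot : ∀ x, Φ x ≠ ⊥)
    {R : ℝ} (hR : ∀ x, R ≤ ‖x‖ → (0 : EReal) ≤ Ψ x + Φ x) {m : ℝ}
    (hm : ∀ x, (m : EReal) ≤ Ψ x + Φ x) {δ : ℝ} (hδ : 0 < δ)
    (hlt : ∀ ε, 0 < ε → ε ≤ 1 / 2 → penalizedInf Ψ Φ ε < ((-(δ * ε) : ℝ) : EReal))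
    {r : ℝ} (hr : 0 < r) : ∃ x, ‖x‖ ≤ R ∧ Φ x ≤ ((-δ : ℝ) : EReal) ∧ Ψ x < r := by
  -- `ψ + εφ < -δε` and `m ≤ ψ + φ` give `(1 - ε) ψ < ε |m|`, hence `ψ < 2ε|m| < r` for this `ε`.
  set ε := r / (2 * (r + |m|))
  have hε : 0 < ε := by positivity
  have hεr : 2 * ε * (r + |m|) = r := by simp only [ε]; field_simp
  have hε₂ : ε ≤ 1 / 2 := by nlinarith [abs_nonneg m]
  obtain ⟨x, hx⟩ := iInf_lt_iff.1 (hlt ε hε hε₂)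
  obtain ⟨ψ, φ, hψ, hφ⟩ := EReal.exists_coe_of_add_coe_mul_lt
    (ne_bot_of_le_ne_bot EReal.zero_ne_bot (hΨ0 x)) (hΦbot x) hε hx
  have hψ0 : 0 ≤ ψ := by exact_mod_cast hψ ▸ hΨ0 x
  have hmx : m ≤ ψ + φ := by exact_mod_cast hψ ▸ hφ ▸ hm x
  have hx : ψ + ε * φ < -(δ * ε) := by exact_mod_cast hψ ▸ hφ ▸ hx
  have hφδ : φ < -δ := by nlinarith
  have hsum : ψ + φ < 0 := by nlinarith
  have hψr : ψ < r := by nlinarith [neg_abs_le m]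
  refine ⟨x, le_of_not_ge fun hRx => ?_, ?_, ?_⟩
  · have := hR x hRx
    rw [hψ, hφ] at this
    exact hsum.not_ge (by exact_mod_cast this)
  · rw [hφ]
    exact_mod_cast hφδ.le
  · rw [hψ]
    exact_mod_cast hψr

section Penalization

variable {E : Type*} [NormedAddCommGroup E] [InnerProductSpace ℝ E] [CompleteSpace E]
  {Ψ Φ : E → EReal}

theorem penalizedInf_ne_bot_and_attained (hΨlsc : LowerSemicontinuous Ψ) (hΨconv : EConvex Ψ)
    (hΦlsc : LowerSemicontinuous Φ) (hΦconv : EConvex Φ) (hΨ0 : ∀ x, 0 ≤ Ψ x) {x₀ : E}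
    (hΨx₀ : Ψ x₀ = 0) (hΦbot : ∀ x, Φ x ≠ ⊥) (hcoer : ECoercive fun x => Ψ x + Φ x) {e : ℝ}
    (he : 0 ≤ e) (he₁ : e ≤ 1) :
    penalizedInf Ψ Φ e ≠ ⊥ ∧ ∃ x, Ψ x + e * Φ x = penalizedInf Ψ Φ e := by
  have hΨbot x : Ψ x ≠ ⊥ := ne_bot_of_le_ne_bot EReal.zero_ne_bot (hΨ0 x)
  have heΦbot x : (e : EReal) * Φ x ≠ ⊥ := EReal.coe_mul_ne_bot he (hΦbot x)
  obtain ⟨x, hx⟩ : ∃ x, ∀ y, Ψ x + e * Φ x ≤ Ψ y + e * Φ y := by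
    rcases he.eq_or_lt with rfl | he
    · exact ⟨x₀, fun y => by simpa [hΨx₀] using hΨ0 y⟩
    · exact (hΨconv.add (hΦconv.coe_mul he.le)).exists_forall_le_of_coercive
        (hΨlsc.add_ereal (hΦlsc.coe_mul_ereal he.le) hΨbot heΦbot) (hcoer.add_coe_mul hΨ0 he he₁)
  have hxω : Ψ x + e * Φ x = penalizedInf Ψ Φ e := le_antisymm (le_iInf hx) (iInf_le _ x)
  exact ⟨hxω ▸ EReal.add_ne_bot_iff.2 ⟨hΨbot x, heΦbot x⟩, x, hxω⟩

theorem exists_le_neg_of_penalizedInf_lt (hΨlsc : LowerSemicontinuous Ψ) (hΨconv : EConvex Ψ)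
    (hΦlsc : LowerSemicontinuous Φ) (hΦconv : EConvex Φ) (hΨ0 : ∀ x, 0 ≤ Ψ x)
    (hΦbot : ∀ x, Φ x ≠ ⊥) (hcoer : ECoercive fun x => Ψ x + Φ x) {m : ℝ}
    (hm : ∀ x, (m : EReal) ≤ Ψ x + Φ x) {δ : ℝ} (hδ : 0 < δ)
    (hlt : ∀ ε, 0 < ε → ε ≤ 1 / 2 → penalizedInf Ψ Φ ε < ((-(δ * ε) : ℝ) : EReal)) :
    ∃ x, Ψ x ≤ 0 ∧ Φ x ≤ ((-δ : ℝ) : EReal) := by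
  obtain ⟨R, hR⟩ := hcoer 0
  obtain ⟨x, hxS, hx⟩ := hΨconv.exists_mem_le_of_forall_lt hΨlsc
    (S := Metric.closedBall 0 R ∩ {x | Φ x ≤ ((-δ : ℝ) : EReal)})
    ((convex_closedBall _ _).inter (hΦconv.convex_le _))
    (Metric.isClosed_closedBall.inter (hΦlsc.isClosed_preimage _))
    (Metric.isBounded_closedBall.subset Set.inter_subset_left) EReal.zero_ne_top fun t ht => by
      obtain ⟨r, hr, hrt⟩ := EReal.lt_iff_exists_real_btwn.1 ht
      obtain ⟨x, hxR, hxΦ, hxΨ⟩ :=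
        exists_near_argMin_of_penalizedInf_lt hΨ0 hΦbot hR hm hδ hlt (EReal.coe_pos.1 hr)
      exact ⟨x, ⟨mem_closedBall_zero_iff.2 hxR, hxΦ⟩, hxΨ.trans hrt⟩
  exact ⟨x, hx, hxS.2⟩

end Penalization

theorem omega_properties_general
    (Ψ Φ : H → EReal)
    (hΨlsc : LowerSemicontinuous Ψ) (hΨconv : EConvex Ψ)
    (hΨinf : (⨅ y : H, Ψ y) = (0 : EReal))
    (hΦlsc : LowerSemicontinuous Φ) (hΦconv : EConvex Φ)
    (hΦproper : (∀ x : H, Φ x ≠ ⊥) ∧ ∃ x : H, Φ x ≠ ⊤)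
    (hΦinf : (⨅ y : ArgMin Ψ, Φ (y : H)) = (0 : EReal))
    (hSne : (ArgMinOn Φ (ArgMin Ψ)).Nonempty)
    (omg : ℝ → EReal) (homg : ∀ e : ℝ, omg e = ⨅ y : H, (Ψ y + (e : EReal) * Φ y)) :
    -- (a)
    ((∀ e : ℝ, 0 ≤ e → omg e ≤ 0) ∧ AntitoneOn omg (Ici 0) ∧
      (∀ e₁ e₂ lam : ℝ, 0 ≤ e₁ → 0 ≤ e₂ → 0 ≤ lam → lam ≤ 1 →
        (lam : EReal) * omg e₁ + ((1 - lam : ℝ) : EReal) * omg e₂ ≤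
          omg (lam * e₁ + (1 - lam) * e₂))) ∧
    -- coercivity of `Ψ + Φ` implies (b) and (c)
    ((∀ M : ℝ, ∃ R : ℝ, ∀ x : H, R ≤ ‖x‖ → (M : EReal) ≤ Ψ x + Φ x) →
      -- (b)
      ((∀ e : ℝ, 0 ≤ e → e ≤ 1 → omg e ≠ ⊥ ∧ ∃ x : H, Ψ x + (e : EReal) * Φ x = omg e) ∧
      -- (c)
        Tendsto (fun e : ℝ => (omg e).toReal / e) (𝓝[>] (0:ℝ)) (𝓝 (0:ℝ)))) := by
  obtain rfl : omg = penalizedInf Ψ Φ := funext homg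
  have hΨ0 : ∀ x, 0 ≤ Ψ x := fun x => hΨinf ▸ iInf_le Ψ x
  obtain ⟨x₀, hx₀C, hx₀min⟩ := hSne
  have hΨx₀ : Ψ x₀ = 0 := le_antisymm (hΨinf ▸ le_iInf hx₀C) (hΨ0 x₀)
  have hΦx₀ : Φ x₀ = 0 := le_antisymm (hΦinf ▸ le_iInf fun y => hx₀min y y.2)
    (hΦinf ▸ iInf_le (fun y : ArgMin Ψ => Φ y) ⟨x₀, hx₀C⟩)
  have hle : ∀ e, penalizedInf Ψ Φ e ≤ 0 := fun e =>
    (iInf_le _ x₀).trans_eq (by rw [hΨx₀, hΦx₀, mul_zero, add_zero])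
  have h0 : penalizedInf Ψ Φ 0 = 0 := by simpa [penalizedInf] using hΨinf
  have hconc := penalizedInf_concave Ψ Φ
  refine ⟨⟨fun e _ => hle e, hconc.antitoneOn h0 fun e _ => hle e, hconc⟩, fun hcoer => ?_⟩
  have hb e (he : 0 ≤ e) (he₁ : e ≤ 1) := penalizedInf_ne_bot_and_attained hΨlsc hΨconv hΦlsc
    hΦconv hΨ0 hΨx₀ hΦproper.1 hcoer he he₁
  refine ⟨hb, hconc.tendsto_toReal_div h0 (fun e _ => hle e) fun δ hδ => ?_⟩
  by_contra! hlt
  have hm : ∀ x, (((penalizedInf Ψ Φ 1).toReal : ℝ) : EReal) ≤ Ψ x + Φ x := fun x => by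
    rw [EReal.coe_toReal ((hle 1).trans_lt EReal.zero_lt_top).ne (hb 1 zero_le_one le_rfl).1]
    simpa [penalizedInf] using iInf_le (fun y => Ψ y + ((1 : ℝ) : EReal) * Φ y) x
  obtain ⟨x, hΨx, hΦx⟩ := exists_le_neg_of_penalizedInf_lt hΨlsc hΨconv hΦlsc hΦconv hΨ0
    hΦproper.1 hcoer hm hδ fun ε hε _ => hlt ε hε
  have hΦx0 : 0 ≤ Φ x :=
    hΦinf ▸ iInf_le (fun y : ArgMin Ψ => Φ y) ⟨x, fun y => hΨx.trans (hΨ0 y)⟩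
  exact absurd (hΦx0.trans hΦx) (by exact_mod_cast (neg_neg_of_pos hδ).not_ge)

/-- properties of `ω(ε) = inf_H (Ψ + εΦ)`: (a) `ω` is nonpositive,
nonincreasing and concave on `[0,∞)`; if `Ψ + Φ` is coercive, then (b) `ω(ε)` is finite
and attained for `ε ∈ [0,1]`, and (c) `ω(ε)/ε → 0` as `ε → 0⁺`. -/
theorem omega_properties
    (Ψ Φ : H → EReal)
    (hΨlsc : LowerSemicontinuous Ψ) (hΨconv : EConvex Ψ)
    (hΨproper : (∀ x : H, Ψ x ≠ ⊥) ∧ ∃ x : H, Ψ x ≠ ⊤)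
    (hΨinf : (⨅ y : H, Ψ y) = (0 : EReal)) (hCne : (ArgMin Ψ).Nonempty)
    (hΦlsc : LowerSemicontinuous Φ) (hΦconv : EConvex Φ)
    (hΦproper : (∀ x : H, Φ x ≠ ⊥) ∧ ∃ x : H, Φ x ≠ ⊤)
    (hΦinf : (⨅ y : ArgMin Ψ, Φ (y : H)) = (0 : EReal))
    (hSne : (ArgMinOn Φ (ArgMin Ψ)).Nonempty)
    (omg : ℝ → EReal) (homg : ∀ e : ℝ, omg e = ⨅ y : H, (Ψ y + (e : EReal) * Φ y)) :
    -- (a)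
    ((∀ e : ℝ, 0 ≤ e → omg e ≤ 0) ∧ AntitoneOn omg (Ici 0) ∧
      (∀ e₁ e₂ lam : ℝ, 0 ≤ e₁ → 0 ≤ e₂ → 0 ≤ lam → lam ≤ 1 →
        (lam : EReal) * omg e₁ + ((1 - lam : ℝ) : EReal) * omg e₂ ≤
          omg (lam * e₁ + (1 - lam) * e₂))) ∧
    -- coercivity of `Ψ + Φ` implies (b) and (c)
    ((∀ M : ℝ, ∃ R : ℝ, ∀ x : H, R ≤ ‖x‖ → (M : EReal) ≤ Ψ x + Φ x) →
      -- (b)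
      ((∀ e : ℝ, 0 ≤ e → e ≤ 1 → omg e ≠ ⊥ ∧ ∃ x : H, Ψ x + (e : EReal) * Φ x = omg e) ∧
      -- (c)
        Tendsto (fun e : ℝ => (omg e).toReal / e) (𝓝[>] (0:ℝ)) (𝓝 (0:ℝ)))) :=
  omega_properties_general Ψ Φ hΨlsc hΨconv hΨinf hΦlsc hΦconv hΦproper hΦinf hSne omg homg
end
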